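/- arXiv:1711.10908 — 8 statements merged into one kernel-verified Lean document; each statement's English description precedes it below -/
import Mathlib

section
/- Let a_m ∈ ℝ[q₁,q₂] be defined by a₀ = 1, a₁ = q₁ and a_m = q₁·a_{m−1} − q₂·a_{m−2} for m ≥ 2. Then for every m ≥ 3 the polynomial a_m is reducible in a graded way: there exist polynomials f, g ∈ ℝ[q₁,q₂], weighted homogeneous of weighted degrees i and j respectively (for the weights w(q₁)=1, w(q₂)=2), with i ≥ 1, j ≥ 1, i + j = m and a_m = f·g. -/
open MvPolynomial

/-- The recursively defined polynomials `a_m ∈ ℝ[q₁,q₂]`: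
`a₀ = 1`, `a₁ = q₁`, `a_m = q₁·a_{m−1} − q₂·a_{m−2}` for `m ≥ 2`.
Here `q₁ = X 0` and `q₂ = X 1`. -/
noncomputable def a : ℕ → MvPolynomial (Fin 2) ℝ
  | 0 => 1
  | 1 => X 0
  | (m + 2) => X 0 * a (m + 1) - X 1 * a m

lemma eval_aeval' (v : Fin 2 → ℝ) (g : Fin 2 → MvPolynomial (Fin 2) ℝ)
    (p : MvPolynomial (Fin 2) ℝ) :
    eval v (aeval g p) = eval (fun i => eval v (g i)) p := by
  induction p using MvPolynomial.induction_on with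
  | C => simp
  | add p q hp hq => simp only [map_add, hp, hq]
  | mul_X p i hp => simp only [map_mul, hp, aeval_X, eval_X]

lemma a_hom : ∀ m : ℕ, (a m).IsWeightedHomogeneous (![1, 2] : Fin 2 → ℕ) m := by
  have hX0 : (X 0 : MvPolynomial (Fin 2) ℝ).IsWeightedHomogeneous ![1,2] 1 := by
    simpa using isWeightedHomogeneous_X ℝ (![1,2] : Fin 2 → ℕ) 0
  have hX1 : (X 1 : MvPolynomial (Fin 2) ℝ).IsWeightedHomogeneous ![1,2] 2 := by
    simpa using isWeightedHomogeneous_X ℝ (![1,2] : Fin 2 → ℕ) 1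
  have key : ∀ m : ℕ, (a m).IsWeightedHomogeneous (![1, 2] : Fin 2 → ℕ) m ∧
      (a (m+1)).IsWeightedHomogeneous (![1, 2] : Fin 2 → ℕ) (m+1) := by
    intro m
    induction m with
    | zero => exact ⟨isWeightedHomogeneous_one _ _, hX0⟩
    | succ n ih =>
      refine ⟨ih.2, ?_⟩
      show (a (n+2)).IsWeightedHomogeneous _ _
      rw [show a (n+2) = X 0 * a (n+1) - X 1 * a n from rfl]
      have h1 := hX0.mul ih.2
      have h2 := hX1.mul ih.1
      rw [← mem_weightedHomogeneousSubmodule] at h1 h2 ⊢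
      have e1 : (1 : ℕ) + (n+1) = n + 2 := by ring
      rw [e1] at h1
      have e2 : (2 : ℕ) + n = n + 2 := by ring
      rw [e2] at h2
      exact sub_mem h1 h2
  exact fun m => (key m).1

lemma cheb : ∀ (m : ℕ) (s θ : ℝ),
    Real.sin θ * eval ![2*s*Real.cos θ, s^2] (a m) = s^m * Real.sin ((m+1)*θ) := by
  have key : ∀ (m : ℕ) (s θ : ℝ),
      (Real.sin θ * eval ![2*s*Real.cos θ, s^2] (a m) = s^m * Real.sin ((m+1)*θ)) ∧
      (Real.sin θ * eval ![2*s*Real.cos θ, s^2] (a (m+1)) = s^(m+1) * Real.sin ((m+2)*θ)) := by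
    intro m
    induction m with
    | zero =>
      intro s θ
      constructor
      · simp [a]
      · show Real.sin θ * eval _ (X 0) = _
        rw [eval_X]
        push_cast
        rw [show ((0:ℝ)+2)*θ = 2*θ by ring, Real.sin_two_mul]
        show Real.sin θ * (2*s*Real.cos θ) = _
        ring
    | succ n ih =>
      intro s θ
      have h1 := (ih s θ).1
      have h2 := (ih s θ).2
      constructor
      · push_cast
        rw [show ((n:ℝ)+1+1)*θ = ((n:ℝ)+2)*θ by ring]
        exact h2
      · show Real.sin θ * eval _ (X 0 * a (n+1) - X 1 * a n) = _
        rw [map_sub, map_mul, map_mul, eval_X, eval_X]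
        have e0 : (![2*s*Real.cos θ, s^2] : Fin 2 → ℝ) 0 = 2*s*Real.cos θ := rfl
        have e1 : (![2*s*Real.cos θ, s^2] : Fin 2 → ℝ) 1 = s^2 := rfl
        rw [e0, e1]
        push_cast
        have trig : 2*Real.cos θ*Real.sin (((n:ℝ)+2)*θ) - Real.sin (((n:ℝ)+1)*θ)
            = Real.sin (((n:ℝ)+1+2)*θ) := by
          have A : ((n:ℝ)+1+2)*θ = ((n:ℝ)+2)*θ + θ := by ring
          have B : ((n:ℝ)+1)*θ = ((n:ℝ)+2)*θ - θ := by ring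
          rw [A, B, Real.sin_add, Real.sin_sub]; ring
        rw [← trig]
        linear_combination (2*s*Real.cos θ) * h2 - s^2 * h1
  intro m
  exact fun s θ => (key m s θ).1

lemma subst_dvd (t : ℝ) (P : MvPolynomial (Fin 2) ℝ) :
    (X 1 - C t * X 0 ^ 2) ∣ P - aeval ![X 0, C t * X 0 ^ 2] P := by
  induction P using MvPolynomial.induction_on with
  | C c => simp
  | add p q hp hq =>
    have h := dvd_add hp hq
    have e : p - aeval ![X 0, C t * X 0 ^ 2] p + (q - aeval ![X 0, C t * X 0 ^ 2] q)
        = p + q - aeval ![X 0, C t * X 0 ^ 2] (p + q) := by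
      rw [map_add]; ring
    rwa [e] at h
  | mul_X p i hp =>
    fin_cases i
    · show (X 1 - C t * X 0 ^ 2) ∣ p * X 0 - (aeval ![X 0, C t * X 0 ^ 2]) (p * X 0)
      have e : p * X 0 - aeval ![X 0, C t * X 0 ^ 2] (p * X 0)
          = (p - aeval ![X 0, C t * X 0 ^ 2] p) * X 0 := by
        rw [map_mul, aeval_X]
        show p * X 0 - _ * (![X 0, C t * X 0 ^ 2] 0) = _
        rw [Matrix.cons_val_zero]; ring
      rw [e]; exact hp.mul_right _
    · show (X 1 - C t * X 0 ^ 2) ∣ p * X 1 - (aeval ![X 0, C t * X 0 ^ 2]) (p * X 1)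
      have e : p * X 1 - aeval ![X 0, C t * X 0 ^ 2] (p * X 1)
          = (p - aeval ![X 0, C t * X 0 ^ 2] p) * X 1
            + aeval ![X 0, C t * X 0 ^ 2] p * (X 1 - C t * X 0 ^ 2) := by
        rw [map_mul, aeval_X]
        show p * X 1 - _ * (![X 0, C t * X 0 ^ 2] 1) = _
        rw [Matrix.cons_val_one, Matrix.cons_val_zero]; ring
      rw [e]
      exact dvd_add (hp.mul_right _) (dvd_mul_left _ _)

lemma comp_mul {w : Fin 2 → ℕ} {i : ℕ} {f : MvPolynomial (Fin 2) ℝ}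
    (hf : f.IsWeightedHomogeneous w i) (g : MvPolynomial (Fin 2) ℝ) (n : ℕ) :
    weightedHomogeneousComponent w (i+n) (f*g) = f * weightedHomogeneousComponent w n g := by
  classical
  have hfin : (Function.support fun k => weightedHomogeneousComponent w k g).Finite :=
    weightedHomogeneousComponent_finsupp g
  calc weightedHomogeneousComponent w (i+n) (f*g)
      = weightedHomogeneousComponent w (i+n) (f * ∑ᶠ k, weightedHomogeneousComponent w k g) := by
        rw [sum_weightedHomogeneousComponent]
    _ = weightedHomogeneousComponent w (i+n) (∑ᶠ k, f * weightedHomogeneousComponent w k g) := by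
        rw [mul_finsum _ _]
    _ = ∑ᶠ k, weightedHomogeneousComponent w (i+n) (f * weightedHomogeneousComponent w k g) := by
        apply (weightedHomogeneousComponent w (i+n)).toAddMonoidHom.map_finsum
        apply hfin.subset
        intro k hk
        simp only [Function.mem_support] at hk ⊢
        intro h0
        exact hk (by rw [h0, mul_zero])
    _ = weightedHomogeneousComponent w (i+n) (f * weightedHomogeneousComponent w n g) := by
        apply finsum_eq_single
        intro k hk
        apply IsWeightedHomogeneous.weightedHomogeneousComponent_ne _
          (hf.mul (weightedHomogeneousComponent_isWeightedHomogeneous k g))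
        intro hc
        exact hk (by omega)
    _ = f * weightedHomogeneousComponent w n g :=
        (hf.mul
          (weightedHomogeneousComponent_isWeightedHomogeneous n g)).weightedHomogeneousComponent_same

lemma key0 (m : ℕ) (hm : 3 ≤ m) :
    aeval (![X 0, C ((4 * Real.cos (Real.pi/(m+1))^2)⁻¹) * X 0 ^ 2] :
      Fin 2 → MvPolynomial (Fin 2) ℝ) (a m) = 0 := by
  set θ := Real.pi/(m+1) with hθ
  set c : ℝ := (4 * Real.cos θ^2)⁻¹ with hc
  have hm1 : (0:ℝ) < (m:ℝ)+1 := by positivity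
  have hθpos : 0 < θ := by rw [hθ]; positivity
  have hθlt : θ < Real.pi/2 := by
    rw [hθ]
    have h3 : (3:ℝ) ≤ (m:ℝ) := by exact_mod_cast hm
    exact div_lt_div_of_pos_left Real.pi_pos (by norm_num) (by linarith)
  have hcos : 0 < Real.cos θ := Real.cos_pos_of_mem_Ioo
    ⟨by linarith [Real.pi_pos], hθlt⟩
  have hcne : Real.cos θ ≠ 0 := ne_of_gt hcos
  have hsin : Real.sin θ ≠ 0 :=
    ne_of_gt (Real.sin_pos_of_pos_of_lt_pi hθpos (by linarith [Real.pi_pos]))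
  apply MvPolynomial.funext
  intro (v : Fin 2 → ℝ)
  rw [eval_aeval', map_zero]
  have hv : (fun i => eval v (![X 0, C c * X 0 ^ 2] i)) = ![v 0, c * (v 0)^2] := by
    funext i; fin_cases i <;> simp
  rw [hv]
  set x := v 0 with hx
  set s : ℝ := x / (2*Real.cos θ) with hs
  have hxe : x = 2*s*Real.cos θ := by
    rw [hs]; field_simp
  have hq2 : c * x^2 = s^2 := by
    rw [hs, hc, div_pow, show (2*Real.cos θ)^2 = 4*Real.cos θ^2 from by ring,
      inv_mul_eq_div]
  have hvec : (![x, c * x^2] : Fin 2 → ℝ) = ![2*s*Real.cos θ, s^2] := by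
    rw [hq2]
    rw [← hxe]  -- hope
  rw [hvec]
  have hcheb := cheb m s θ
  have hsinm : Real.sin ((m+1)*θ) = 0 := by
    rw [show ((m:ℝ)+1)*θ = Real.pi by rw [hθ]; field_simp]
    exact Real.sin_pi
  rw [hsinm, mul_zero] at hcheb
  exact (mul_eq_zero.mp hcheb).resolve_left hsin

/-- For every `m ≥ 3` the polynomial `a_m` is reducible in a graded way: it is a
product of two weighted homogeneous polynomials of positive weighted degrees
`i`, `j` with `i + j = m` (for the weights `w(q₁) = 1`, `w(q₂) = 2`). -/
theorem stmt_3 (m : ℕ) (hm : 3 ≤ m) :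
    ∃ (f g : MvPolynomial (Fin 2) ℝ) (i j : ℕ),
      f.IsWeightedHomogeneous (![1, 2] : Fin 2 → ℕ) i ∧
      g.IsWeightedHomogeneous (![1, 2] : Fin 2 → ℕ) j ∧
      1 ≤ i ∧ 1 ≤ j ∧ i + j = m ∧ a m = f * g := by
  set t : ℝ := (4 * Real.cos (Real.pi/(m+1))^2)⁻¹ with ht
  have h0 := key0 m hm
  rw [← ht] at h0
  obtain ⟨g, hg⟩ := subst_dvd t (a m)
  rw [h0, sub_zero] at hg
  set f : MvPolynomial (Fin 2) ℝ := X 1 - C t * X 0 ^ 2 with hf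
  have hX0 : (X 0 : MvPolynomial (Fin 2) ℝ).IsWeightedHomogeneous ![1,2] 1 := by
    simpa using isWeightedHomogeneous_X ℝ (![1,2] : Fin 2 → ℕ) 0
  have hX1 : (X 1 : MvPolynomial (Fin 2) ℝ).IsWeightedHomogeneous ![1,2] 2 := by
    simpa using isWeightedHomogeneous_X ℝ (![1,2] : Fin 2 → ℕ) 1
  have hfh : f.IsWeightedHomogeneous (![1,2] : Fin 2 → ℕ) 2 := by
    have hsq : ((X 0 : MvPolynomial (Fin 2) ℝ)^2).IsWeightedHomogeneous ![1,2] 2 := by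
      rw [pow_two]; exact hX0.mul hX0
    have h2 : ((C t * X 0 ^ 2 : MvPolynomial (Fin 2) ℝ)).IsWeightedHomogeneous ![1,2] 2 := by
      have := (isWeightedHomogeneous_C (![1,2] : Fin 2 → ℕ) t).mul hsq
      simpa using this
    rw [hf, ← mem_weightedHomogeneousSubmodule]
    exact sub_mem ((mem_weightedHomogeneousSubmodule _ _ _ _).mpr hX1)
      ((mem_weightedHomogeneousSubmodule _ _ _ _).mpr h2)
  set g' := weightedHomogeneousComponent (![1,2] : Fin 2 → ℕ) (m-2) g with hg'
  have hmain : a m = f * g' := by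
    have h2 : 2 + (m-2) = m := by omega
    calc a m = weightedHomogeneousComponent ![1,2] m (a m) :=
          ((a_hom m).weightedHomogeneousComponent_same).symm
      _ = weightedHomogeneousComponent ![1,2] (2+(m-2)) (f*g) := by rw [h2, hg]
      _ = f * g' := comp_mul hfh g (m-2)
  exact ⟨f, g', 2, m-2, hfh, weightedHomogeneousComponent_isWeightedHomogeneous _ _,
    by norm_num, by omega, by omega, hmain⟩
end

section
/- Fix m ≥ 3 and let I_m ⊆ ℝ[q₁,q₂] be the ideal generated by a_m and q₂·a_{m−1}. Then q₂ ∉ I_m and a_{m−1} ∉ I_m, while q₂·a_{m−1} ∈ I_m. (Thus the classes of q₂ and a_{m−1}, which are nonzero homogeneous elements of weighted degrees 2 and m−1 of the ring ℝ[q₁,q₂]/I_m ≅ H^•(G(1,m);ℝ), multiply to zero; this is the algebraic core of the upper bound e.d.(G(1,m)) ≤ m.) -/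
open MvPolynomial

/-- The weighted-degree substitution `q₁ ↦ q₁ t`, `q₂ ↦ q₂ t²`. -/
noncomputable def phi : MvPolynomial (Fin 2) ℝ →ₐ[ℝ] Polynomial (MvPolynomial (Fin 2) ℝ) :=
  aeval ![Polynomial.C (X 0) * Polynomial.X, Polynomial.C (X 1) * Polynomial.X ^ 2]

lemma phi_X0 : phi (X 0) = Polynomial.C (X 0) * Polynomial.X := by
  simp [phi]

lemma phi_X1 : phi (X 1) = Polynomial.C (X 1) * Polynomial.X ^ 2 := by
  simp [phi]

lemma phi_a : ∀ m, phi (a m) = Polynomial.C (a m) * Polynomial.X ^ m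
  | 0 => by simp [a]
  | 1 => by simpa [a] using phi_X0
  | (m + 2) => by
      rw [a, map_sub, map_mul, map_mul, phi_X0, phi_X1, phi_a (m + 1), phi_a m, map_sub,
        map_mul, map_mul]
      ring

lemma a_eval : ∀ m, MvPolynomial.eval (fun i : Fin 2 => if i = 0 then (2:ℝ) else 1) (a m)
    = m + 1
  | 0 => by simp [a]
  | 1 => by norm_num [a]
  | (m + 2) => by
      rw [a, map_sub, map_mul, map_mul, a_eval (m + 1), a_eval m]
      simp only [eval_X, if_pos rfl, Fin.isValue]
      norm_num
      ring

lemma a_ne_zero (m : ℕ) : a m ≠ 0 := by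
  intro h
  have := a_eval m
  rw [h] at this
  simp at this
  have : (0:ℝ) ≤ (m:ℝ) := by positivity
  linarith

/-- Let `I_m` be the ideal of `ℝ[q₁,q₂]` generated by `a_m` and `q₂·a_{m−1}`
(for a fixed `m ≥ 3`).  Then `q₂ ∉ I_m` and `a_{m−1} ∉ I_m`, while
`q₂·a_{m−1} ∈ I_m`. -/
theorem stmt_6 (m : ℕ) (hm : 3 ≤ m) :
    (X 1 : MvPolynomial (Fin 2) ℝ) ∉
        Ideal.span ({a m, X 1 * a (m - 1)} : Set (MvPolynomial (Fin 2) ℝ)) ∧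
    a (m - 1) ∉ Ideal.span ({a m, X 1 * a (m - 1)} : Set (MvPolynomial (Fin 2) ℝ)) ∧
    X 1 * a (m - 1) ∈ Ideal.span ({a m, X 1 * a (m - 1)} : Set (MvPolynomial (Fin 2) ℝ)) := by
  obtain ⟨k, rfl⟩ : ∃ k, m = k + 3 := ⟨m - 3, by omega⟩
  have hm1 : k + 3 - 1 = k + 2 := by omega
  rw [hm1]
  have key : ∀ f ∈ Ideal.span ({a (k + 3), X 1 * a (k + 2)} : Set (MvPolynomial (Fin 2) ℝ)),
      ∀ j < k + 3, (phi f).coeff j = 0 := by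
    intro f hf j hj
    rw [Ideal.mem_span_pair] at hf
    obtain ⟨p, q, hpq⟩ := hf
    have : phi f = (phi p * Polynomial.C (a (k + 3))) * Polynomial.X ^ (k + 3)
        + (phi q * Polynomial.C (X 1 * a (k + 2))) * Polynomial.X ^ (k + 4) := by
      rw [← hpq, map_add, map_mul, map_mul, map_mul, phi_X1, phi_a, phi_a]
      push_cast [map_mul]
      ring
    rw [this, Polynomial.coeff_add, Polynomial.coeff_mul_X_pow', Polynomial.coeff_mul_X_pow']
    rw [if_neg (by omega), if_neg (by omega)]
    simp
  refine ⟨?_, ?_, Ideal.subset_span (by simp)⟩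
  · intro h
    have h2 := key _ h 2 (by omega)
    rw [phi_X1, Polynomial.coeff_C_mul, Polynomial.coeff_X_pow, if_pos rfl, mul_one] at h2
    exact MvPolynomial.X_ne_zero 1 h2
  · intro h
    have h2 := key _ h (k + 2) (by omega)
    rw [phi_a, Polynomial.coeff_C_mul, Polynomial.coeff_X_pow, if_pos rfl, mul_one] at h2
    exact a_ne_zero (k + 2) h2
end

section
/- Fix an integer n ≥ 2, let J_n ⊆ ℝ[x,y] be the ideal generated by y² − (−1)ⁿ·x^{2n} and x·y, and set α = x^n + y and β = x^n − y. Then: α ∉ J_n and β ∉ J_n; x^i·y ∈ J_n for every i ≥ 1; if n is even then α·β ∈ J_n; and if n is odd then α² ∈ J_n and β² ∈ J_n. -/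
open MvPolynomial

/-- Fix `n ≥ 2`, let `J_n ⊆ ℝ[x,y]` be the ideal generated by
`y² − (−1)ⁿ·x^{2n}` and `x·y` (here `x = X 0`, `y = X 1`), and set
`α = xⁿ + y`, `β = xⁿ − y`.  Then `α ∉ J_n`, `β ∉ J_n`, `x^i·y ∈ J_n` for
every `i ≥ 1`; if `n` is even then `α·β ∈ J_n`; if `n` is odd then
`α² ∈ J_n` and `β² ∈ J_n`. -/
theorem stmt_10 (n : ℕ) (hn : 2 ≤ n) :
    ((X 0 : MvPolynomial (Fin 2) ℝ) ^ n + X 1) ∉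
        Ideal.span ({X 1 ^ 2 - C ((-1 : ℝ) ^ n) * X 0 ^ (2 * n), X 0 * X 1} :
          Set (MvPolynomial (Fin 2) ℝ)) ∧
    ((X 0 : MvPolynomial (Fin 2) ℝ) ^ n - X 1) ∉
        Ideal.span ({X 1 ^ 2 - C ((-1 : ℝ) ^ n) * X 0 ^ (2 * n), X 0 * X 1} :
          Set (MvPolynomial (Fin 2) ℝ)) ∧
    (∀ i : ℕ, 1 ≤ i →
      (X 0 : MvPolynomial (Fin 2) ℝ) ^ i * X 1 ∈
        Ideal.span ({X 1 ^ 2 - C ((-1 : ℝ) ^ n) * X 0 ^ (2 * n), X 0 * X 1} :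
          Set (MvPolynomial (Fin 2) ℝ))) ∧
    (Even n →
      ((X 0 : MvPolynomial (Fin 2) ℝ) ^ n + X 1) * (X 0 ^ n - X 1) ∈
        Ideal.span ({X 1 ^ 2 - C ((-1 : ℝ) ^ n) * X 0 ^ (2 * n), X 0 * X 1} :
          Set (MvPolynomial (Fin 2) ℝ))) ∧
    (Odd n →
      ((X 0 : MvPolynomial (Fin 2) ℝ) ^ n + X 1) ^ 2 ∈
        Ideal.span ({X 1 ^ 2 - C ((-1 : ℝ) ^ n) * X 0 ^ (2 * n), X 0 * X 1} :
          Set (MvPolynomial (Fin 2) ℝ)) ∧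
      ((X 0 : MvPolynomial (Fin 2) ℝ) ^ n - X 1) ^ 2 ∈
        Ideal.span ({X 1 ^ 2 - C ((-1 : ℝ) ^ n) * X 0 ^ (2 * n), X 0 * X 1} :
          Set (MvPolynomial (Fin 2) ℝ))) := by
  obtain ⟨m, rfl⟩ : ∃ m, n = m + 2 := ⟨n - 2, by omega⟩
  set g1 : MvPolynomial (Fin 2) ℝ :=
    X 1 ^ 2 - C ((-1 : ℝ) ^ (m + 2)) * X 0 ^ (2 * (m + 2)) with hg1
  set g2 : MvPolynomial (Fin 2) ℝ := X 0 * X 1 with hg2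
  have key : ∀ c : ℝ, c ^ 2 = 1 →
      ((X 0 : MvPolynomial (Fin 2) ℝ) ^ (m + 2) + C c * X 1) ∉
        Ideal.span ({g1, g2} : Set (MvPolynomial (Fin 2) ℝ)) := by
    intro c hc hmem
    rw [Ideal.mem_span_pair] at hmem
    obtain ⟨u, v, huv⟩ := hmem
    set φ : MvPolynomial (Fin 2) ℝ →ₐ[ℝ] Polynomial ℝ :=
      aeval (fun i : Fin 2 => if i = 0 then Polynomial.X
        else Polynomial.C c * Polynomial.X ^ (m + 2)) with hφ
    have e0 : φ (X 0) = Polynomial.X := by simp [hφ]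
    have e1 : φ (X 1) = Polynomial.C c * Polynomial.X ^ (m + 2) := by simp [hφ]
    have eC : φ (C (-1 : ℝ)) = Polynomial.C (-1 : ℝ) := by simp [hφ]
    have eg1 : φ g1 = (Polynomial.C c ^ 2 - Polynomial.C (-1 : ℝ) ^ (m + 2)) *
        Polynomial.X ^ (2 * m + 4) := by
      simp only [hg1, map_sub, map_mul, map_pow, e0, e1, eC]
      ring
    have eg2 : φ g2 = Polynomial.C c * Polynomial.X ^ (m + 3) := by
      rw [hg2, map_mul, e0, e1]; ring
    have ea : φ (X 0 ^ (m + 2) + C c * X 1) =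
        Polynomial.C (2 : ℝ) * Polynomial.X ^ (m + 2) := by
      have eCc : φ (C c) = Polynomial.C c := by simp [hφ]
      have hcc : Polynomial.C c * Polynomial.C c = 1 := by
        rw [← Polynomial.C_mul, show c * c = c ^ 2 by ring, hc, Polynomial.C_1]
      rw [map_add, map_pow, map_mul, eCc, e0, e1,
        show (2 : ℝ) = 1 + 1 by norm_num, Polynomial.C_add, Polynomial.C_1]
      linear_combination Polynomial.X ^ (m + 2) * hcc
    have hdvd : (Polynomial.X : Polynomial ℝ) ^ (m + 3) ∣
        Polynomial.C (2 : ℝ) * Polynomial.X ^ (m + 2) := by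
      refine ⟨φ u * ((Polynomial.C c ^ 2 - Polynomial.C (-1 : ℝ) ^ (m + 2)) *
        Polynomial.X ^ (m + 1)) + φ v * Polynomial.C c, ?_⟩
      have h := congrArg φ huv
      rw [map_add, map_mul, map_mul, eg1, eg2, ea] at h
      rw [← h]; ring
    have hne : Polynomial.C (2 : ℝ) * Polynomial.X ^ (m + 2) ≠ 0 := by
      exact mul_ne_zero (Polynomial.C_ne_zero.mpr two_ne_zero)
        (pow_ne_zero _ Polynomial.X_ne_zero)
    have hle := Polynomial.natDegree_le_of_dvd hdvd hne
    rw [Polynomial.natDegree_X_pow, Polynomial.natDegree_C_mul two_ne_zero,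
      Polynomial.natDegree_X_pow] at hle
    omega
  refine ⟨?_, ?_, ?_, ?_, ?_⟩
  · have := key 1 (by norm_num)
    simpa using this
  · have := key (-1) (by norm_num)
    simpa [sub_eq_add_neg] using this
  · intro i hi
    obtain ⟨k, rfl⟩ : ∃ k, i = k + 1 := ⟨i - 1, by omega⟩
    rw [Ideal.mem_span_pair]
    exact ⟨0, X 0 ^ k, by rw [hg2]; ring⟩
  · intro hev
    rw [Ideal.mem_span_pair]
    refine ⟨-1, 0, ?_⟩
    rw [hg1, hev.neg_one_pow, map_one]
    ring
  · intro hodd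
    have hpow : ((-1 : ℝ)) ^ (m + 2) = -1 := hodd.neg_one_pow
    constructor <;> rw [Ideal.mem_span_pair]
    · exact ⟨1, 2 * X 0 ^ (m + 1), by rw [hg1, hg2, hpow]; simp only [map_neg, map_one]; ring⟩
    · exact ⟨1, -(2 * X 0 ^ (m + 1)), by rw [hg1, hg2, hpow]; simp only [map_neg, map_one]; ring⟩
end

section
/- Let n ≥ 1 and let p ∈ ℝ[x₁,…,x_n] be a polynomial. Then p is symmetric (fixed by renaming along every permutation of the variables) and satisfies τ_i(p) = p for every i (where τ_i is the ℝ-algebra endomorphism sending x_i ↦ −x_i and fixing the other variables) if and only if p belongs to the ℝ-subalgebra of ℝ[x₁,…,x_n] generated by the polynomials e_k(x₁²,…,x_n²), 1 ≤ k ≤ n, where e_k denotes the k-th elementary symmetric polynomial. -/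
open MvPolynomial Finset

set_option maxRecDepth 4000
open MvPolynomial Finset

variable {n : ℕ}

private noncomputable def tau (i : Fin n) : MvPolynomial (Fin n) ℝ →ₐ[ℝ] MvPolynomial (Fin n) ℝ :=
  aeval (fun j : Fin n => if j = i then -X i else (X j : MvPolynomial (Fin n) ℝ))

private lemma tau_monomial (i : Fin n) (u : Fin n →₀ ℕ) (c : ℝ) :
    tau i (monomial u c) = C ((-1 : ℝ) ^ (u i)) * monomial u c := by
  rw [tau, aeval_monomial, monomial_eq, algebraMap_eq]
  simp only [Finsupp.prod]
  have h : ∀ j ∈ u.support,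
      (if j = i then -X i else (X j : MvPolynomial (Fin n) ℝ)) ^ (u j)
        = ((-1 : MvPolynomial (Fin n) ℝ) ^ (if j = i then u j else 0)) * X j ^ (u j) := by
    intro j _
    split <;> rename_i hji
    · subst hji
      have hx : (-X j : MvPolynomial (Fin n) ℝ) = (-1) * X j := by ring
      rw [hx, mul_pow]
    · simp
  rw [Finset.prod_congr rfl h, Finset.prod_mul_distrib, Finset.prod_pow_eq_pow_sum,
    Finset.sum_ite_eq' u.support i]
  have h1 : (-1 : MvPolynomial (Fin n) ℝ) = C (-1) := by simp
  have h2 : (if i ∈ u.support then u i else 0) = u i := by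
    split <;> rename_i hi
    · rfl
    · exact (Finsupp.notMem_support_iff.mp hi).symm
  rw [h2, h1, ← map_pow]
  ring

private lemma coeff_tau (i : Fin n) (p : MvPolynomial (Fin n) ℝ) (u : Fin n →₀ ℕ) :
    coeff u (tau i p) = (-1 : ℝ) ^ (u i) * coeff u p := by
  conv_lhs => rw [p.as_sum, map_sum]
  simp_rw [tau_monomial]
  rw [coeff_sum]
  simp_rw [coeff_C_mul, coeff_monomial]
  rw [Finset.sum_eq_single u]
  · simp
  · intro v _ hv; simp [hv]
  · intro hu; simp [MvPolynomial.notMem_support_iff.mp hu]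

private lemma expand_two_monomial (u : Fin n →₀ ℕ) (c : ℝ) :
    expand 2 (monomial u c) = monomial (2 • u) c := by
  rw [expand_monomial, monomial_eq]

private lemma coeff_expand_two (p : MvPolynomial (Fin n) ℝ) (u : Fin n →₀ ℕ) :
    coeff (2 • u) (expand 2 p) = coeff u p := by
  conv_lhs => rw [p.as_sum, map_sum]
  simp_rw [expand_two_monomial]
  rw [coeff_sum]
  simp_rw [coeff_monomial]
  rw [Finset.sum_eq_single u]
  · simp
  · intro v _ hv
    have : ¬(2 • v = 2 • u) := by
      intro h; apply hv; ext j
      have := congrArg (fun f : Fin n →₀ ℕ => f j) h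
      simpa using this
    simp [this]
  · intro hu; simp [MvPolynomial.notMem_support_iff.mp hu]

private lemma expand_two_injective :
    Function.Injective (expand 2 : MvPolynomial (Fin n) ℝ →ₐ[ℝ] MvPolynomial (Fin n) ℝ) := by
  intro p q h
  ext u
  rw [← coeff_expand_two p u, ← coeff_expand_two q u, h]

private noncomputable def half (u : Fin n →₀ ℕ) : Fin n →₀ ℕ :=
  u.mapRange (· / 2) (by simp)

private lemma two_smul_half {u : Fin n →₀ ℕ} (h : ∀ i, Even (u i)) : 2 • half u = u := by
  ext j
  have : (2 : ℕ) ∣ u j := (h j).two_dvd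
  simp [half, Finsupp.mapRange_apply, Nat.mul_div_cancel' this]

private lemma mem_range_expand_two {p : MvPolynomial (Fin n) ℝ}
    (h : ∀ u ∈ p.support, ∀ i, Even (u i)) : ∃ q, expand 2 q = p := by
  refine ⟨∑ u ∈ p.support, monomial (half u) (coeff u p), ?_⟩
  rw [map_sum]
  simp_rw [expand_two_monomial]
  conv_rhs => rw [p.as_sum]
  exact Finset.sum_congr rfl fun u hu => by rw [two_smul_half (h u hu)]

private lemma even_of_tau (i : Fin n) {p : MvPolynomial (Fin n) ℝ} (h : tau i p = p) :
    ∀ u ∈ p.support, Even (u i) := by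
  intro u hu
  by_contra hodd
  have h1 : coeff u p = (-1 : ℝ) ^ (u i) * coeff u p := by
    conv_lhs => rw [← h, coeff_tau]
  rw [(Nat.not_even_iff_odd.mp hodd).neg_one_pow, neg_one_mul] at h1
  have : coeff u p = 0 := by linarith
  exact MvPolynomial.mem_support_iff.mp hu this

private lemma gen_eq (k : ℕ) :
    (∑ t ∈ Finset.powersetCard k (Finset.univ : Finset (Fin n)),
        ∏ i ∈ t, (X i : MvPolynomial (Fin n) ℝ) ^ 2)
      = expand 2 (esymm (Fin n) ℝ k) := by
  rw [esymm, map_sum]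
  exact Finset.sum_congr rfl fun t _ => by rw [map_prod]; simp [expand_X]

private lemma tau_expand_two (i : Fin n) (φ : MvPolynomial (Fin n) ℝ) :
    tau i (expand 2 φ) = expand 2 φ := by
  have h : (tau i).comp (expand 2) = (expand 2 : MvPolynomial (Fin n) ℝ →ₐ[ℝ] _) := by
    apply MvPolynomial.algHom_ext
    intro j
    simp only [AlgHom.comp_apply, expand_X, map_pow, tau, aeval_X]
    split <;> rename_i hji
    · subst hji; ring
    · rfl
  exact DFunLike.congr_fun h φ


/-- Invariant theory of the hyperoctahedral group (Weyl group of type Bₙ/Cₙ):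
a polynomial `p ∈ ℝ[x₁,…,xₙ]` is symmetric and invariant under every sign
change `τᵢ : xᵢ ↦ −xᵢ` if and only if `p` lies in the ℝ-subalgebra generated
by the elementary symmetric polynomials `e_k(x₁²,…,xₙ²)`, `1 ≤ k ≤ n`. -/
theorem stmt_12 (n : ℕ) (hn : 1 ≤ n) (p : MvPolynomial (Fin n) ℝ) :
    (p.IsSymmetric ∧
      ∀ i : Fin n,
        aeval (fun j : Fin n =>
          if j = i then -X i else (X j : MvPolynomial (Fin n) ℝ)) p = p) ↔
    p ∈ Algebra.adjoin ℝ
      {q : MvPolynomial (Fin n) ℝ |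
        ∃ k : ℕ, 1 ≤ k ∧ k ≤ n ∧
          q = ∑ t ∈ Finset.powersetCard k (Finset.univ : Finset (Fin n)),
                ∏ i ∈ t, (X i : MvPolynomial (Fin n) ℝ) ^ 2} := by
  set S : Set (MvPolynomial (Fin n) ℝ) :=
    {q : MvPolynomial (Fin n) ℝ |
        ∃ k : ℕ, 1 ≤ k ∧ k ≤ n ∧
          q = ∑ t ∈ Finset.powersetCard k (Finset.univ : Finset (Fin n)),
                ∏ i ∈ t, (X i : MvPolynomial (Fin n) ℝ) ^ 2} with hS
  constructor
  · rintro ⟨hsym, htau⟩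
    have htau' : ∀ i : Fin n, tau i p = p := htau
    obtain ⟨q, rfl⟩ := mem_range_expand_two (fun u hu i => even_of_tau i (htau' i) u hu)
    have hq : q.IsSymmetric := by
      intro e
      apply expand_two_injective
      rw [← rename_expand]
      exact hsym e
    obtain ⟨r, hr⟩ := esymmAlgHom_surjective (σ := Fin n) ℝ (n := n)
      (by simp) ⟨q, (mem_symmetricSubalgebra q).mpr hq⟩
    have hq' : aeval (fun i : Fin n => esymm (Fin n) ℝ (i + 1)) r = q := by
      rw [← esymmAlgHom_apply, hr]
    have hkey : expand 2 q
        = aeval (fun i : Fin n => expand 2 (esymm (Fin n) ℝ (i + 1))) r := by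
      rw [← hq', ← comp_aeval_apply]
    rw [hkey]
    have hmem : aeval (fun i : Fin n => expand 2 (esymm (Fin n) ℝ (i + 1))) r
        ∈ (aeval (fun i : Fin n => expand 2 (esymm (Fin n) ℝ (i + 1)))).range :=
      ⟨r, rfl⟩
    rw [← Algebra.adjoin_range_eq_range_aeval] at hmem
    refine Algebra.adjoin_mono ?_ hmem
    rintro x ⟨i, rfl⟩
    exact ⟨i + 1, Nat.le_add_left 1 i, by omega, (gen_eq _).symm⟩
  · intro hp
    set T : Subalgebra ℝ (MvPolynomial (Fin n) ℝ) :=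
      symmetricSubalgebra (Fin n) ℝ ⊓
        ⨅ i : Fin n, AlgHom.equalizer (tau i) (AlgHom.id ℝ (MvPolynomial (Fin n) ℝ)) with hT
    have hle : Algebra.adjoin ℝ S ≤ T := by
      apply Algebra.adjoin_le
      rintro x ⟨k, _, _, rfl⟩
      rw [gen_eq]
      refine Algebra.mem_inf.mpr ⟨?_, ?_⟩
      · exact (mem_symmetricSubalgebra _).mpr fun e => by
          rw [rename_expand, (esymm_isSymmetric (Fin n) ℝ k) e]
      · refine Algebra.mem_iInf.mpr fun i => ?_
        exact (AlgHom.mem_equalizer _ _ _).mpr (tau_expand_two i _)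
    have hpT := hle hp
    rw [hT, Algebra.mem_inf, Algebra.mem_iInf] at hpT
    exact ⟨(mem_symmetricSubalgebra p).mp hpT.1,
      fun i => (AlgHom.mem_equalizer _ _ _).mp (hpT.2 i)⟩
end

section
/- Let n ≥ 2 and let p ∈ ℝ[x₁,…,x_n] be a polynomial. Then p is symmetric (fixed by renaming along every permutation of the variables) and satisfies τ_i(τ_j(p)) = p for all i ≠ j (where τ_i is the ℝ-algebra endomorphism sending x_i ↦ −x_i and fixing the other variables; so p is fixed by every even number of sign changes) if and only if p belongs to the ℝ-subalgebra of ℝ[x₁,…,x_n] generated by the polynomials e_k(x₁²,…,x_n²) for 1 ≤ k ≤ n−1 together with the product η_n = x₁·x₂⋯x_n, where e_k denotes the k-th elementary symmetric polynomial. -/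
open MvPolynomial

set_option maxRecDepth 8000

namespace D4Aux
variable {n : ℕ}

noncomputable def T (i : Fin n) : MvPolynomial (Fin n) ℝ →ₐ[ℝ] MvPolynomial (Fin n) ℝ :=
  aeval (fun l => if l = i then -X i else X l)

noncomputable def Φ : MvPolynomial (Fin n) ℝ →ₐ[ℝ] MvPolynomial (Fin n) ℝ :=
  aeval (fun i => X i ^ 2)

lemma T_monomial (i : Fin n) (d : Fin n →₀ ℕ) (c : ℝ) :
    T i (monomial d c) = monomial d ((-1) ^ (d i) * c) := by
  rw [T, aeval_monomial]
  have : (d.prod fun l k => (if l = i then -X i else X l : MvPolynomial (Fin n) ℝ) ^ k)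
      = ((-1 : MvPolynomial (Fin n) ℝ) ^ (d i)) * d.prod fun l k => (X l : MvPolynomial (Fin n) ℝ) ^ k := by
    unfold Finsupp.prod
    have h1 : ∀ l ∈ d.support, (if l = i then -X i else X l : MvPolynomial (Fin n) ℝ) ^ d l
        = (if l = i then (-1 : MvPolynomial (Fin n) ℝ) ^ d l else 1) * X l ^ d l := by
      intro l _
      by_cases h : l = i
      · subst h; rw [if_pos rfl, if_pos rfl, ← neg_one_mul, mul_pow]
      · simp [h]
    rw [Finset.prod_congr rfl h1, Finset.prod_mul_distrib]
    congr 1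
    rw [Finset.prod_ite_eq' d.support i (fun l => (-1 : MvPolynomial (Fin n) ℝ) ^ d l)]
    by_cases h : i ∈ d.support
    · simp [h]
    · simp [h, Finsupp.notMem_support_iff.mp h]
  rw [this, show ((-1 : MvPolynomial (Fin n) ℝ)) ^ d i = C ((-1 : ℝ) ^ d i) by simp,
    monomial_eq, algebraMap_eq, C_mul]
  ring

lemma coeff_T (i : Fin n) (p : MvPolynomial (Fin n) ℝ) (e : Fin n →₀ ℕ) :
    coeff e (T i p) = (-1) ^ (e i) * coeff e p := by
  conv_lhs => rw [p.as_sum]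
  rw [map_sum, coeff_sum]
  have h1 : ∀ d ∈ p.support, coeff e (T i (monomial d (coeff d p)))
      = if d = e then (-1 : ℝ) ^ (d i) * coeff d p else 0 := by
    intro d _
    rw [T_monomial, coeff_monomial]
  rw [Finset.sum_congr rfl h1,
    Finset.sum_ite_eq' p.support e (fun d => (-1 : ℝ) ^ (d i) * coeff d p)]
  by_cases h : e ∈ p.support
  · simp [h]
  · simp [h, MvPolynomial.notMem_support_iff.mp h]

lemma Φ_monomial (d : Fin n →₀ ℕ) (c : ℝ) :
    Φ (monomial d c) = monomial (d + d) c := by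
  rw [Φ, aeval_monomial, monomial_eq, algebraMap_eq]
  congr 1
  rw [Finsupp.prod, Finsupp.prod]
  have hs : (d + d).support = d.support := by
    ext l; simp [Finsupp.mem_support_iff]
  rw [hs]
  apply Finset.prod_congr rfl
  intro l _
  rw [Finsupp.add_apply, ← two_mul, pow_mul, ← pow_mul, mul_comm 2 (d l), pow_mul]

lemma coeff_Φ (p : MvPolynomial (Fin n) ℝ) (e : Fin n →₀ ℕ) :
    coeff (e + e) (Φ p) = coeff e p := by
  conv_lhs => rw [p.as_sum]
  rw [map_sum, coeff_sum]
  have h1 : ∀ d ∈ p.support, coeff (e + e) (Φ (monomial d (coeff d p)))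
      = if d = e then coeff d p else 0 := by
    intro d _
    rw [Φ_monomial, coeff_monomial]
    congr 1
    simp only [eq_iff_iff]
    constructor
    · intro h
      ext l
      have h2 : d l + d l = e l + e l := by
        have := DFunLike.congr_fun h l
        simpa [Finsupp.add_apply] using this
      omega
    · rintro rfl; rfl
  rw [Finset.sum_congr rfl h1, Finset.sum_ite_eq' p.support e (fun d => coeff d p)]
  by_cases h : e ∈ p.support
  · simp [h]
  · simp [h, MvPolynomial.notMem_support_iff.mp h]

lemma Φ_injective : Function.Injective (Φ (n := n)) := by
  intro a b h
  ext e
  rw [← coeff_Φ a e, ← coeff_Φ b e, h]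

lemma rename_Φ (σ : Equiv.Perm (Fin n)) (p : MvPolynomial (Fin n) ℝ) :
    rename σ (Φ p) = Φ (rename σ p) := by
  have : (rename (σ : Fin n → Fin n) : MvPolynomial (Fin n) ℝ →ₐ[ℝ] _).comp Φ
      = Φ.comp (rename (σ : Fin n → Fin n)) := by
    apply algHom_ext
    intro i
    simp [Φ]
  exact DFunLike.congr_fun this p

lemma T_Φ (i : Fin n) (p : MvPolynomial (Fin n) ℝ) : T i (Φ p) = Φ p := by
  have : (T i).comp Φ = Φ := by
    apply algHom_ext
    intro l
    by_cases h : l = i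
    · subst h; simp [Φ, T]
    · simp [Φ, T, h]
  exact DFunLike.congr_fun this p

noncomputable def η : MvPolynomial (Fin n) ℝ := ∏ i, X i

noncomputable def uu (n : ℕ) : Fin n →₀ ℕ := Finsupp.equivFunOnFinite.symm (fun _ => 1)

@[simp] lemma uu_apply (l : Fin n) : uu n l = 1 := rfl

lemma η_eq : (η : MvPolynomial (Fin n) ℝ) = monomial (uu n) 1 := by
  rw [monomial_eq, C_1, one_mul, Finsupp.prod]
  have hs : (uu n).support = Finset.univ := by
    ext l; simp [Finsupp.mem_support_iff]
  rw [hs, η]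
  exact (Finset.prod_congr rfl (fun l _ => by rw [uu_apply, pow_one])).symm

lemma η_ne_zero : (η : MvPolynomial (Fin n) ℝ) ≠ 0 := by
  rw [η_eq]
  intro h
  exact one_ne_zero ((monomial_eq_zero).mp h)

lemma rename_η (σ : Equiv.Perm (Fin n)) : rename σ (η : MvPolynomial (Fin n) ℝ) = η := by
  rw [η, map_prod]
  simp only [rename_X]
  exact Equiv.prod_comp σ (fun i => (X i : MvPolynomial (Fin n) ℝ))

lemma T_η (i : Fin n) : T i (η : MvPolynomial (Fin n) ℝ) = -η := by
  rw [η_eq, T_monomial]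
  simp

lemma coeff_sum_monomial (s : Finset (Fin n →₀ ℕ)) (f : (Fin n →₀ ℕ) → ℝ) (e : Fin n →₀ ℕ) :
    coeff e (∑ d ∈ s, monomial d (f d)) = if e ∈ s then f e else 0 := by
  rw [coeff_sum]
  simp_rw [coeff_monomial]
  exact Finset.sum_ite_eq' s e f

lemma parity_lemma {p : MvPolynomial (Fin n) ℝ}
    (hp2 : ∀ i j : Fin n, i ≠ j → T i (T j p) = p)
    {d : Fin n →₀ ℕ} (hd : d ∈ p.support) (i j : Fin n) :
    (Even (d i) ↔ Even (d j)) := by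
  rcases eq_or_ne i j with rfl | hij
  · rfl
  by_cases h : Even (d i + d j)
  · exact Nat.even_add.mp h
  · exfalso
    have hc : coeff d (T i (T j p)) = coeff d p := by rw [hp2 i j hij]
    rw [coeff_T, coeff_T, ← mul_assoc, ← pow_add] at hc
    have hodd : ¬ Even (d i + d j) := h
    rw [Nat.not_even_iff_odd] at hodd
    rw [hodd.neg_one_pow, neg_one_mul] at hc
    have : coeff d p = 0 := by linarith
    exact (MvPolynomial.mem_support_iff.mp hd) this

lemma exists_Φ (r : MvPolynomial (Fin n) ℝ)
    (he : ∀ d ∈ r.support, ∀ i, Even (d i)) : ∃ s, Φ s = r := by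
  refine ⟨∑ d ∈ r.support, monomial (d.mapRange (· / 2) (by norm_num)) (coeff d r), ?_⟩
  rw [map_sum]
  have h1 : ∀ d ∈ r.support,
      Φ (monomial (d.mapRange (· / 2) (by norm_num)) (coeff d r)) = monomial d (coeff d r) := by
    intro d hd
    rw [Φ_monomial]
    have h2 : d.mapRange (· / 2) (by norm_num) + d.mapRange (· / 2) (by norm_num) = d := by
      ext l
      obtain ⟨m, hm⟩ := he d hd l
      simp only [Finsupp.add_apply, Finsupp.mapRange_apply, hm]
      omega
    rw [h2]
  rw [Finset.sum_congr rfl h1, ← r.as_sum]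

noncomputable def G (n : ℕ) : Set (MvPolynomial (Fin n) ℝ) :=
  {q : MvPolynomial (Fin n) ℝ |
      ∃ k : ℕ, 1 ≤ k ∧ k ≤ n - 1 ∧
        q = ∑ t ∈ Finset.powersetCard k (Finset.univ : Finset (Fin n)),
              ∏ i ∈ t, (X i : MvPolynomial (Fin n) ℝ) ^ 2} ∪
    {∏ i : Fin n, (X i : MvPolynomial (Fin n) ℝ)}

lemma η_mem_G : (η : MvPolynomial (Fin n) ℝ) ∈ G n := Or.inr rfl

lemma Φ_esymm (k : ℕ) :
    Φ (esymm (Fin n) ℝ k)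
      = ∑ t ∈ Finset.powersetCard k (Finset.univ : Finset (Fin n)),
          ∏ i ∈ t, (X i : MvPolynomial (Fin n) ℝ) ^ 2 := by
  rw [esymm, map_sum]
  refine Finset.sum_congr rfl fun t _ => ?_
  rw [map_prod]
  exact Finset.prod_congr rfl fun i _ => by simp [Φ]

lemma esymm_n_eq : esymm (Fin n) ℝ n = η := by
  rw [esymm, η]
  have : Finset.powersetCard n (Finset.univ : Finset (Fin n)) = {Finset.univ} := by
    simpa using Finset.powersetCard_self (Finset.univ : Finset (Fin n))
  rw [this, Finset.sum_singleton]

lemma Φ_esymm_mem (hn : 2 ≤ n) (i : Fin n) :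
    Φ (esymm (Fin n) ℝ (i + 1)) ∈ Algebra.adjoin ℝ (G n) := by
  rcases eq_or_lt_of_le (Nat.succ_le_of_lt i.2) with h | h
  · -- i + 1 = n
    have h' : (i : ℕ) + 1 = n := h
    rw [h', esymm_n_eq]
    have : Φ (η : MvPolynomial (Fin n) ℝ) = η ^ 2 := by
      rw [η, map_prod]
      simp only [Φ, aeval_X]
      rw [← Finset.prod_pow]
    rw [this]
    exact pow_mem (Algebra.subset_adjoin η_mem_G) 2
  · refine Algebra.subset_adjoin (Or.inl ⟨i + 1, le_add_self, by omega, Φ_esymm _⟩)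

lemma even_symm_mem_adjoin (hn : 2 ≤ n) (r : MvPolynomial (Fin n) ℝ)
    (hsym : r.IsSymmetric) (he : ∀ d ∈ r.support, ∀ i, Even (d i)) :
    r ∈ Algebra.adjoin ℝ (G n) := by
  obtain ⟨s, rfl⟩ := exists_Φ r he
  have hssym : s.IsSymmetric := by
    intro σ
    apply Φ_injective
    rw [← rename_Φ, hsym σ]
  obtain ⟨w, hw⟩ := esymmAlgHom_surjective ℝ (n := n)
    (le_of_eq (Fintype.card_fin n)) ⟨s, hssym⟩
  have hs : s = aeval (fun i : Fin n => esymm (Fin n) ℝ (i + 1)) w := by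
    rw [← esymmAlgHom_apply, hw]
  have hmem : s ∈ Algebra.adjoin ℝ
      (Set.range fun i : Fin n => esymm (Fin n) ℝ (i + 1)) := by
    rw [Algebra.adjoin_range_eq_range_aeval]
    exact ⟨w, hs.symm⟩
  have : Φ s ∈ (Algebra.adjoin ℝ
      (Set.range fun i : Fin n => esymm (Fin n) ℝ (i + 1))).map Φ :=
    Subalgebra.mem_map.mpr ⟨s, hmem, rfl⟩
  rw [AlgHom.map_adjoin] at this
  refine Algebra.adjoin_le ?_ this
  rintro x ⟨y, ⟨i, rfl⟩, rfl⟩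
  exact Φ_esymm_mem hn i

lemma support_pred_rename (σ : Equiv.Perm (Fin n)) (Q : ℕ → Prop)
    (f : MvPolynomial (Fin n) ℝ) (h : ∀ e ∈ f.support, ∀ i, Q (e i)) :
    ∀ e ∈ (rename (σ : Fin n → Fin n) f).support, ∀ i, Q (e i) := by
  classical
  intro e he i
  rw [support_rename_of_injective σ.injective] at he
  obtain ⟨d, hd, rfl⟩ := Finset.mem_image.mp he
  have hmd : (Finsupp.mapDomain (σ : Fin n → Fin n) d) i = d (σ.symm i) := by
    conv_lhs => rw [show i = σ (σ.symm i) by simp]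
    rw [Finsupp.mapDomain_apply σ.injective]
  rw [hmd]
  exact h d hd _

lemma forward (hn : 2 ≤ n) (p : MvPolynomial (Fin n) ℝ) (hsym : p.IsSymmetric)
    (hinv : ∀ i j : Fin n, i ≠ j → T i (T j p) = p) :
    p ∈ Algebra.adjoin ℝ (G n) := by
  classical
  set i0 : Fin n := ⟨0, by omega⟩ with hi0
  have hpar : ∀ d ∈ p.support, ∀ i j : Fin n, (Even (d i) ↔ Even (d j)) :=
    fun d hd i j => parity_lemma hinv hd i j
  set P : (Fin n →₀ ℕ) → Prop := fun d => ∀ i, Even (d i) with hPdef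
  set p₀ := ∑ d ∈ p.support.filter P, monomial d (coeff d p) with hp0def
  have hc0 : ∀ e, coeff e p₀ = if e ∈ p.support.filter P then coeff e p else 0 :=
    fun e => coeff_sum_monomial _ _ e
  have hsupp0 : ∀ e ∈ p₀.support, ∀ i, Even (e i) := by
    intro e he i
    have hne := MvPolynomial.mem_support_iff.mp he
    rw [hc0] at hne
    by_cases h : e ∈ p.support.filter P
    · exact (Finset.mem_filter.mp h).2 i
    · simp [h] at hne
  set p₁ := p - p₀ with hp1def
  have hc1 : ∀ e, coeff e p₁ = if e ∈ p.support.filter P then 0 else coeff e p := by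
    intro e
    rw [hp1def, coeff_sub, hc0]
    by_cases h : e ∈ p.support.filter P <;> simp [h]
  have hsupp1 : ∀ e ∈ p₁.support, ∀ i, Odd (e i) := by
    intro e he i
    have hne := MvPolynomial.mem_support_iff.mp he
    rw [hc1] at hne
    by_cases h : e ∈ p.support.filter P
    · simp [h] at hne
    · rw [if_neg h] at hne
      have hesupp : e ∈ p.support := MvPolynomial.mem_support_iff.mpr hne
      have hnotP : ¬ P e := fun hPe => h (Finset.mem_filter.mpr ⟨hesupp, hPe⟩)
      obtain ⟨j, hj⟩ : ∃ j, ¬ Even (e j) := by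
        by_contra hall
        push_neg at hall
        exact hnotP (fun i => hall i)
      have : ¬ Even (e i) := fun hEv => hj ((hpar e hesupp i j).mp hEv)
      exact Nat.not_even_iff_odd.mp this
  have hsplit : p = p₀ + p₁ := by rw [hp1def]; ring
  have hmemsub : ∀ (a b : MvPolynomial (Fin n) ℝ) e, e ∈ (a - b).support →
      e ∈ a.support ∨ e ∈ b.support := by
    intro a b e he
    by_contra hc
    push_neg at hc
    have h1 := MvPolynomial.notMem_support_iff.mp hc.1
    have h2 := MvPolynomial.notMem_support_iff.mp hc.2
    exact MvPolynomial.mem_support_iff.mp he (by rw [coeff_sub, h1, h2, sub_zero])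
  have huniq : ∀ f : MvPolynomial (Fin n) ℝ,
      (∀ e ∈ f.support, ∀ i, Even (e i)) → (∀ e ∈ f.support, ∀ i, Odd (e i)) → f = 0 := by
    intro f hev hod
    by_contra hf
    obtain ⟨e, he⟩ := MvPolynomial.support_nonempty.mpr hf
    exact (Nat.not_odd_iff_even.mpr (hev e he i0)) (hod e he i0)
  have key : ∀ σ : Equiv.Perm (Fin n), rename σ p₀ = p₀ ∧ rename σ p₁ = p₁ := by
    intro σ
    have hsum : rename (σ : Fin n → Fin n) p₀ + rename (σ : Fin n → Fin n) p₁ = p₀ + p₁ := by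
      rw [← map_add, ← hsplit, hsym σ, hsplit]
    have hz : p₀ - rename (σ : Fin n → Fin n) p₀ = 0 := by
      apply huniq
      · intro e he i
        rcases hmemsub _ _ e he with h | h
        · exact hsupp0 e h i
        · exact support_pred_rename σ Even p₀ hsupp0 e h i
      · intro e he i
        have heq : p₀ - rename (σ : Fin n → Fin n) p₀
            = rename (σ : Fin n → Fin n) p₁ - p₁ := by
          linear_combination -hsum
        rw [heq] at he
        rcases hmemsub _ _ e he with h | h
        · exact support_pred_rename σ Odd p₁ hsupp1 e h i
        · exact hsupp1 e h i
    have h0 : rename (σ : Fin n → Fin n) p₀ = p₀ := by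
      have := sub_eq_zero.mp hz
      exact this.symm
    refine ⟨h0, ?_⟩
    have := hsum
    rw [h0] at this
    exact add_left_cancel this
  have hsym0 : p₀.IsSymmetric := fun σ => (key σ).1
  have h0mem : p₀ ∈ Algebra.adjoin ℝ (G n) := even_symm_mem_adjoin hn p₀ hsym0 hsupp0
  set q := ∑ d ∈ p₁.support, monomial (d - uu n) (coeff d p₁) with hqdef
  have hq : η * q = p₁ := by
    rw [hqdef, Finset.mul_sum]
    have h1 : ∀ d ∈ p₁.support,
        η * monomial (d - uu n) (coeff d p₁) = monomial d (coeff d p₁) := by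
      intro d hd
      rw [η_eq, monomial_mul, one_mul]
      have h2 : uu n + (d - uu n) = d := by
        ext l
        obtain ⟨m, hm⟩ := hsupp1 d hd l
        simp only [Finsupp.add_apply, Finsupp.tsub_apply, uu_apply, hm]
        omega
      rw [h2]
    rw [Finset.sum_congr rfl h1, ← p₁.as_sum]
  have hsuppq : ∀ e ∈ q.support, ∀ i, Even (e i) := by
    intro e he i
    rw [hqdef] at he
    have h1 := MvPolynomial.support_sum he
    obtain ⟨d, hd, hed⟩ := Finset.mem_biUnion.mp h1
    classical
    rw [support_monomial] at hed
    by_cases hc : coeff d p₁ = 0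
    · rw [if_pos hc] at hed; exact absurd hed (Finset.notMem_empty e)
    · rw [if_neg hc] at hed
      have : e = d - uu n := Finset.mem_singleton.mp hed
      subst this
      obtain ⟨m, hm⟩ := hsupp1 d hd i
      simp only [Finsupp.tsub_apply, uu_apply, hm]
      exact ⟨m, by omega⟩
  have hqsym : q.IsSymmetric := by
    intro σ
    have h1 : η * rename (σ : Fin n → Fin n) q = η * q := by
      conv_lhs => rw [← rename_η σ, ← map_mul, hq, (key σ).2]
      rw [hq]
    exact mul_left_cancel₀ η_ne_zero h1
  have hqmem : q ∈ Algebra.adjoin ℝ (G n) := even_symm_mem_adjoin hn q hqsym hsuppq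
  have hfin : p = p₀ + η * q := by rw [hq]; exact hsplit
  rw [hfin]
  exact add_mem h0mem (mul_mem (Algebra.subset_adjoin η_mem_G) hqmem)

lemma backward (p : MvPolynomial (Fin n) ℝ) (hp : p ∈ Algebra.adjoin ℝ (G n)) :
    p.IsSymmetric ∧ ∀ i j : Fin n, i ≠ j → T i (T j p) = p := by
  constructor
  · have hle : Algebra.adjoin ℝ (G n) ≤ symmetricSubalgebra (Fin n) ℝ := by
      apply Algebra.adjoin_le
      rintro x (⟨k, hk1, hk2, rfl⟩ | rfl) <;> simp only [SetLike.mem_coe]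
      · rw [mem_symmetricSubalgebra, ← Φ_esymm]
        intro σ
        rw [rename_Φ, esymm_isSymmetric (Fin n) ℝ k σ]
      · exact (mem_symmetricSubalgebra _).mpr (fun σ => rename_η σ)
    exact (mem_symmetricSubalgebra p).mp (hle hp)
  · intro i j hij
    have hle : Algebra.adjoin ℝ (G n) ≤ AlgHom.equalizer ((T i).comp (T j))
        (AlgHom.id ℝ (MvPolynomial (Fin n) ℝ)) := by
      apply Algebra.adjoin_le
      rintro x (⟨k, hk1, hk2, rfl⟩ | rfl) <;> simp only [SetLike.mem_coe]
      · rw [AlgHom.mem_equalizer, ← Φ_esymm]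
        show T i (T j (Φ (esymm (Fin n) ℝ k))) = Φ (esymm (Fin n) ℝ k)
        rw [T_Φ, T_Φ]
      · rw [AlgHom.mem_equalizer]
        show T i (T j (η : MvPolynomial (Fin n) ℝ)) = η
        rw [T_η, map_neg, T_η, neg_neg]
    exact hle hp

end D4Aux

/-- Invariant theory of the Weyl group of type Dₙ (permutations and even sign
changes): a polynomial `p ∈ ℝ[x₁,…,xₙ]` is symmetric and invariant under every
composition `τᵢ ∘ τⱼ` (`i ≠ j`) of two sign changes `τᵢ : xᵢ ↦ −xᵢ` if and
only if `p` lies in the ℝ-subalgebra generated by the elementary symmetric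
polynomials `e_k(x₁²,…,xₙ²)`, `1 ≤ k ≤ n − 1`, together with
`ηₙ = x₁·x₂⋯xₙ`. -/
theorem stmt_13 (n : ℕ) (hn : 2 ≤ n) (p : MvPolynomial (Fin n) ℝ) :
    (p.IsSymmetric ∧
      ∀ i j : Fin n, i ≠ j →
        aeval (fun l : Fin n =>
            if l = i then -X i else (X l : MvPolynomial (Fin n) ℝ))
          (aeval (fun l : Fin n =>
            if l = j then -X j else (X l : MvPolynomial (Fin n) ℝ)) p) = p) ↔
    p ∈ Algebra.adjoin ℝ
      ({q : MvPolynomial (Fin n) ℝ |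
          ∃ k : ℕ, 1 ≤ k ∧ k ≤ n - 1 ∧
            q = ∑ t ∈ Finset.powersetCard k (Finset.univ : Finset (Fin n)),
                  ∏ i ∈ t, (X i : MvPolynomial (Fin n) ℝ) ^ 2} ∪
        {∏ i : Fin n, (X i : MvPolynomial (Fin n) ℝ)}) := by
  constructor
  · rintro ⟨hsym, hinv⟩
    exact D4Aux.forward hn p hsym (fun i j hij => hinv i j hij)
  · intro hp
    obtain ⟨h1, h2⟩ := D4Aux.backward p hp
    exact ⟨h1, fun i j hij => h2 i j hij⟩
end

section
/- Let n ≥ 1, let 1 ≤ r ≤ n, and let p ∈ ℝ[x₁,…,x_n] be a polynomial. Then p is fixed by renaming along every permutation of Fin n that maps the set of the first r indices to itself, and satisfies τ_i(p) = p for every i with r < i ≤ n (where τ_i is the ℝ-algebra endomorphism sending x_i ↦ −x_i and fixing the other variables), if and only if p belongs to the ℝ-subalgebra of ℝ[x₁,…,x_n] generated by the polynomials e_k(x₁,…,x_r) for 1 ≤ k ≤ r together with the polynomials e_k(x_{r+1}²,…,x_n²) for 1 ≤ k ≤ n−r, where e_k denotes the k-th elementary symmetric polynomial in the indicated variables. 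-/
open MvPolynomial

namespace Stmt14

open Finset

variable (n r : ℕ)


variable (n r : ℕ)

noncomputable def Phi : MvPolynomial (Fin n) ℝ →ₐ[ℝ] MvPolynomial (Fin n) ℝ :=
  aeval (fun j : Fin n => if (j : ℕ) < r then X j else X j ^ 2)

noncomputable def fE (t : Fin n →₀ ℕ) : Fin n →₀ ℕ :=
  t + t.filter (fun j : Fin n => ¬ (j : ℕ) < r)

lemma fE_apply (t : Fin n →₀ ℕ) (j : Fin n) :
    fE n r t j = t j + if ¬ (j : ℕ) < r then t j else 0 := by
  simp [fE, Finsupp.filter_apply]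

lemma fE_injective : Function.Injective (fE n r) := by
  intro t s h
  ext j
  have h1 := DFunLike.congr_fun h j
  rw [fE_apply, fE_apply] at h1
  by_cases hj : (j : ℕ) < r <;> simp [hj] at h1 <;> omega

lemma Phi_monomial (t : Fin n →₀ ℕ) (a : ℝ) :
    Phi n r (monomial t a) = monomial (fE n r t) a := by
  have hsupp : (fE n r t).support = t.support := by
    ext j
    simp only [Finsupp.mem_support_iff, fE_apply]
    by_cases hj : (j : ℕ) < r <;> simp [hj] <;> omega
  rw [Phi, aeval_monomial, monomial_eq, algebraMap_eq]
  congr 1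
  rw [Finsupp.prod, Finsupp.prod, hsupp]
  refine Finset.prod_congr rfl fun j _ => ?_
  by_cases h : (j : ℕ) < r
  · simp [h, fE_apply]
  · rw [if_neg h, fE_apply, if_pos h, ← pow_mul]
    congr 1
    omega

lemma Phi_injective : Function.Injective (Phi n r) := by
  have key : ∀ q : MvPolynomial (Fin n) ℝ, Phi n r q = AddMonoidAlgebra.mapDomain (fE n r) q := by
    intro q
    induction q using MvPolynomial.induction_on' with
    | monomial t a =>
        rw [Phi_monomial, ← single_eq_monomial, ← single_eq_monomial,
          AddMonoidAlgebra.mapDomain_single]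
    | add p q hp hq => rw [map_add, hp, hq]; exact (AddMonoidAlgebra.mapDomain_add _ _ _).symm
  intro a b h
  rw [key, key] at h
  exact AddMonoidAlgebra.mapDomain_injective (fE_injective n r) h

noncomputable def hE (m : Fin n →₀ ℕ) : Fin n →₀ ℕ :=
  Finsupp.onFinset m.support (fun j => if (j : ℕ) < r then m j else m j / 2)
    (by intro a ha; simp only [Finsupp.mem_support_iff]; intro h; apply ha; simp [h])

lemma fE_hE (m : Fin n →₀ ℕ) (h : ∀ j : Fin n, ¬ (j : ℕ) < r → Even (m j)) :
    fE n r (hE n r m) = m := by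
  ext j
  rw [fE_apply]
  by_cases hj : (j : ℕ) < r
  · simp [hE, hj]
  · obtain ⟨c, hc⟩ := h j hj
    simp only [hE, Finsupp.onFinset_apply, if_neg hj, if_pos hj]
    omega

variable {n r} in
lemma exists_phi_pre (p : MvPolynomial (Fin n) ℝ)
    (h : ∀ m ∈ p.support, ∀ j : Fin n, ¬ (j : ℕ) < r → Even (m j)) :
    ∃ q, Phi n r q = p := by
  refine ⟨∑ m ∈ p.support, monomial (hE n r m) (coeff m p), ?_⟩
  rw [map_sum]
  conv_rhs => rw [p.as_sum]
  refine Finset.sum_congr rfl fun m hm => ?_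
  rw [Phi_monomial, fE_hE n r m (h m hm)]

variable {n r} in
lemma even_of_tau (p : MvPolynomial (Fin n) ℝ) (i : Fin n)
    (h : aeval (fun j : Fin n => if j = i then -X i else (X j : MvPolynomial (Fin n) ℝ)) p = p)
    (m : Fin n →₀ ℕ) (hm : m ∈ p.support) : Even (m i) := by
  classical
  have hmono : ∀ (t : Fin n →₀ ℕ) (a : ℝ),
      aeval (fun j : Fin n => if j = i then -X i else (X j : MvPolynomial (Fin n) ℝ))
        (monomial t a) = monomial t ((-1) ^ (t i) * a) := by
    intro t a
    rw [aeval_monomial]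
    have hfac : ∀ j ∈ t.support,
        (if j = i then -X i else (X j : MvPolynomial (Fin n) ℝ)) ^ (t j)
        = (if j = i then (-1 : MvPolynomial (Fin n) ℝ) ^ (t j) else 1) * X j ^ (t j) := by
      intro j _
      by_cases hji : j = i
      · subst hji; rw [if_pos rfl, if_pos rfl, neg_pow]
      · simp [hji]
    rw [Finsupp.prod, Finset.prod_congr rfl hfac, Finset.prod_mul_distrib,
      Finset.prod_ite_eq']
    have h2 : (if i ∈ t.support then ((-1 : MvPolynomial (Fin n) ℝ)) ^ (t i) else 1)
        = (-1) ^ (t i) := by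
      split_ifs with hmem
      · rfl
      · rw [Finsupp.notMem_support_iff.mp hmem, pow_zero]
    rw [h2, algebraMap_eq, monomial_eq, Finsupp.prod]
    simp only [map_mul, map_pow, map_neg, map_one]
    ring
  have hco : coeff m (aeval (fun j : Fin n => if j = i then -X i
      else (X j : MvPolynomial (Fin n) ℝ)) p) = (-1 : ℝ) ^ (m i) * coeff m p := by
    conv_lhs => rw [p.as_sum, map_sum]
    simp_rw [hmono]
    rw [coeff_sum]
    rw [Finset.sum_eq_single_of_mem m hm (fun t _ htm => by
      rw [coeff_monomial, if_neg htm])]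
    rw [coeff_monomial, if_pos rfl]
  rw [h] at hco
  by_contra hodd
  rw [Nat.not_even_iff_odd] at hodd
  rw [hodd.neg_one_pow] at hco
  have hne := mem_support_iff.mp hm
  have : coeff m p = 0 := by linarith
  exact hne this

variable {n r} in
lemma perm_iff (σ : Equiv.Perm (Fin n))
    (hσ : ∀ i : Fin n, (i : ℕ) < r → ((σ i : Fin n) : ℕ) < r) :
    ∀ i : Fin n, (i : ℕ) < r ↔ ((σ i : Fin n) : ℕ) < r := by
  classical
  intro i
  set Af := (univ : Finset (Fin n)).filter (fun i : Fin n => (i : ℕ) < r) with hAf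
  have himg : Af.image σ = Af := by
    apply Finset.eq_of_subset_of_card_le
    · intro x hx
      simp only [Finset.mem_image] at hx
      obtain ⟨y, hy, rfl⟩ := hx
      simp only [hAf, mem_filter, mem_univ, true_and] at hy ⊢
      exact hσ y hy
    · rw [Finset.card_image_of_injective _ σ.injective]
  constructor
  · exact hσ i
  · intro h
    have hmem : σ i ∈ Af := by simp [hAf, h]
    rw [← himg, Finset.mem_image] at hmem
    obtain ⟨y, hy, hyi⟩ := hmem
    have hyeq : y = i := σ.injective hyi
    subst hyeq
    simpa [hAf] using hy

variable {n r} in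
lemma Phi_rename (σ : Equiv.Perm (Fin n))
    (hσ : ∀ i : Fin n, (i : ℕ) < r ↔ ((σ i : Fin n) : ℕ) < r) (x : MvPolynomial (Fin n) ℝ) :
    Phi n r (rename σ x) = rename σ (Phi n r x) := by
  induction x using MvPolynomial.induction_on with
  | C a => simp [Phi]
  | add p q hp hq => simp only [map_add, hp, hq]
  | mul_X p j hp =>
      rw [map_mul, map_mul, map_mul, map_mul, hp, rename_X]
      congr 1
      simp only [Phi, aeval_X]
      by_cases h : (j : ℕ) < r
      · rw [if_pos ((hσ j).mp h), if_pos h, rename_X]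
      · rw [if_neg (fun hc => h ((hσ j).mpr hc)), if_neg h, map_pow, rename_X]





noncomputable def genA (k : ℕ) : MvPolynomial (Fin n) ℝ :=
  ∑ t ∈ Finset.powersetCard k ((univ : Finset (Fin n)).filter fun i : Fin n => (i : ℕ) < r),
    ∏ i ∈ t, X i

noncomputable def genB (k : ℕ) : MvPolynomial (Fin n) ℝ :=
  ∑ t ∈ Finset.powersetCard k ((univ : Finset (Fin n)).filter fun i : Fin n => r ≤ (i : ℕ)),
    ∏ i ∈ t, X i ^ 2

lemma filterB_eq :
    ((univ : Finset (Fin n)).filter fun i : Fin n => r ≤ (i : ℕ)) =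
      (univ : Finset (Fin n)).filter fun i : Fin n => ¬ (i : ℕ) < r := by
  refine Finset.filter_congr fun i _ => ?_
  simp [not_lt]

lemma G1 (k : ℕ) :
    rename (Subtype.val : {i : Fin n // (i : ℕ) < r} → Fin n)
      (esymm {i : Fin n // (i : ℕ) < r} ℝ k) = genA n r k := by
  classical
  rw [esymm, genA, map_sum, ← Finset.univ_map_subtype (fun i : Fin n => (i : ℕ) < r),
    Finset.powersetCard_map, Finset.sum_map]
  refine Finset.sum_congr rfl fun t _ => ?_
  rw [map_prod, RelEmbedding.coe_toEmbedding, Finset.mapEmbedding_apply, Finset.prod_map]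
  simp [Function.Embedding.subtype]
  rfl

lemma G2' (k : ℕ) :
    rename (Subtype.val : {i : Fin n // ¬ (i : ℕ) < r} → Fin n)
      (esymm {i : Fin n // ¬ (i : ℕ) < r} ℝ k) =
    ∑ t ∈ Finset.powersetCard k
        ((univ : Finset (Fin n)).filter fun i : Fin n => ¬ (i : ℕ) < r),
      ∏ i ∈ t, (X i : MvPolynomial (Fin n) ℝ) := by
  classical
  rw [esymm, map_sum, ← Finset.univ_map_subtype (fun i : Fin n => ¬ (i : ℕ) < r),
    Finset.powersetCard_map, Finset.sum_map]
  refine Finset.sum_congr rfl fun t _ => ?_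
  rw [map_prod, RelEmbedding.coe_toEmbedding, Finset.mapEmbedding_apply, Finset.prod_map]
  simp [Function.Embedding.subtype]
  rfl

lemma G2 (k : ℕ) :
    Phi n r (rename (Subtype.val : {i : Fin n // ¬ (i : ℕ) < r} → Fin n)
      (esymm {i : Fin n // ¬ (i : ℕ) < r} ℝ k)) = genB n r k := by
  classical
  rw [G2', genB, filterB_eq, map_sum]
  refine Finset.sum_congr rfl fun t ht => ?_
  rw [map_prod]
  refine Finset.prod_congr rfl fun j hj => ?_
  have hjr : ¬ (j : ℕ) < r := by
    have := (Finset.mem_powersetCard.mp ht).1 hj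
    simpa using this
  rw [Phi, aeval_X, if_neg hjr]

lemma PhiA (k : ℕ) : Phi n r (genA n r k) = genA n r k := by
  classical
  rw [genA, map_sum]
  refine Finset.sum_congr rfl fun t ht => ?_
  rw [map_prod]
  refine Finset.prod_congr rfl fun j hj => ?_
  have hjr : (j : ℕ) < r := by
    have := (Finset.mem_powersetCard.mp ht).1 hj
    simpa using this
  rw [Phi, aeval_X, if_pos hjr]

variable {n r} in
lemma card_A (hrn : r ≤ n) : Fintype.card {i : Fin n // (i : ℕ) < r} = r := by
  have e : {i : Fin n // (i : ℕ) < r} ≃ Fin r :=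
    { toFun := fun x => ⟨x.1.1, x.2⟩
      invFun := fun y => ⟨⟨y.1, lt_of_lt_of_le y.2 hrn⟩, y.2⟩
      left_inv := fun x => by ext; rfl
      right_inv := fun y => rfl }
  rw [Fintype.card_congr e, Fintype.card_fin]

variable {n r} in
lemma card_B (hrn : r ≤ n) : Fintype.card {i : Fin n // ¬ (i : ℕ) < r} = n - r := by
  rw [Fintype.card_subtype_compl, Fintype.card_fin, card_A hrn]

variable {n r} in
lemma genA_rename (σ : Equiv.Perm (Fin n))
    (hσ : ∀ i : Fin n, (i : ℕ) < r ↔ ((σ i : Fin n) : ℕ) < r) (k : ℕ) :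
    rename σ (genA n r k) = genA n r k := by
  rw [← G1, rename_rename]
  have hfun : ⇑σ ∘ (Subtype.val : {i : Fin n // (i : ℕ) < r} → Fin n)
      = Subtype.val ∘ ⇑(σ.subtypePerm (fun x => (hσ x).symm)) := rfl
  rw [hfun, ← rename_rename, rename_esymm]


variable {n r} in
lemma genB_rename (σ : Equiv.Perm (Fin n))
    (hσ : ∀ i : Fin n, (i : ℕ) < r ↔ ((σ i : Fin n) : ℕ) < r) (k : ℕ) :
    rename σ (genB n r k) = genB n r k := by
  rw [← G2, ← Phi_rename σ hσ, rename_rename]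
  have hσ' : ∀ x : Fin n, ¬ (x : ℕ) < r ↔ ¬ ((σ x : Fin n) : ℕ) < r :=
    fun x => not_iff_not.mpr (hσ x)
  have hfun : ⇑σ ∘ (Subtype.val : {i : Fin n // ¬ (i : ℕ) < r} → Fin n)
      = Subtype.val ∘ ⇑(σ.subtypePerm (fun x => (hσ' x).symm)) := rfl
  rw [hfun, ← rename_rename, rename_esymm]

variable {n r} in
lemma genA_tau (i : Fin n) (hi : r ≤ (i : ℕ)) (k : ℕ) :
    aeval (fun j : Fin n => if j = i then -X i else (X j : MvPolynomial (Fin n) ℝ))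
      (genA n r k) = genA n r k := by
  rw [genA, map_sum]
  refine Finset.sum_congr rfl fun t ht => ?_
  rw [map_prod]
  refine Finset.prod_congr rfl fun j hj => ?_
  have hjr : (j : ℕ) < r := by
    have := (Finset.mem_powersetCard.mp ht).1 hj
    simpa using this
  rw [aeval_X, if_neg]
  intro hji
  rw [hji] at hjr
  omega

variable {n r} in
lemma genB_tau (i : Fin n) (k : ℕ) :
    aeval (fun j : Fin n => if j = i then -X i else (X j : MvPolynomial (Fin n) ℝ))
      (genB n r k) = genB n r k := by
  rw [genB, map_sum]
  refine Finset.sum_congr rfl fun t _ => ?_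
  rw [map_prod]
  refine Finset.prod_congr rfl fun j _ => ?_
  rw [map_pow, aeval_X]
  split_ifs with h
  · rw [h, neg_sq]
  · rfl


section SumEquiv
variable {S₁ S₂ : Type*}


variable {S₁ S₂ : Type*}

lemma sumAlgEquiv_rename_left (π : Equiv.Perm S₁) (x : MvPolynomial (S₁ ⊕ S₂) ℝ) :
    (sumAlgEquiv ℝ S₁ S₂) (rename (Equiv.sumCongr π (Equiv.refl S₂)) x)
      = rename π ((sumAlgEquiv ℝ S₁ S₂) x) := by
  induction x using MvPolynomial.induction_on with
  | C a => simp
  | add p q hp hq => simp only [map_add, hp, hq]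
  | mul_X p j hp =>
      rw [map_mul, map_mul, map_mul, map_mul, hp]
      congr 1
      cases j with
      | inl a => simp
      | inr b => simp

lemma sumAlgEquiv_rename_right (ρ : Equiv.Perm S₂) (x : MvPolynomial (S₁ ⊕ S₂) ℝ) :
    (sumAlgEquiv ℝ S₁ S₂) (rename (Equiv.sumCongr (Equiv.refl S₁) ρ) x)
      = map (rename (R := ℝ) ⇑ρ).toRingHom ((sumAlgEquiv ℝ S₁ S₂) x) := by
  induction x using MvPolynomial.induction_on with
  | C a => simp
  | add p q hp hq => simp only [map_add, hp, hq]
  | mul_X p j hp =>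
      rw [map_mul, map_mul, map_mul, map_mul, hp]
      congr 1
      cases j with
      | inl a => simp
      | inr b => simp

lemma sumAlgEquiv_symm_C (x : MvPolynomial S₂ ℝ) :
    (sumAlgEquiv ℝ S₁ S₂).symm (C x) = rename Sum.inr x := by
  rw [AlgEquiv.symm_apply_eq]
  have h := DFunLike.congr_fun (sumAlgEquiv_comp_rename_inr (R := ℝ) (S₁ := S₁) (S₂ := S₂)) x
  simp only [AlgHom.comp_apply, AlgEquiv.toAlgHom_eq_coe, AlgHom.coe_coe] at h
  erw [h]
  rfl

lemma sumAlgEquiv_symm_esymm [Fintype S₁] (k : ℕ) :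
    (sumAlgEquiv ℝ S₁ S₂).symm (esymm S₁ (MvPolynomial S₂ ℝ) k)
      = rename Sum.inl (esymm S₁ ℝ k) := by
  rw [AlgEquiv.symm_apply_eq]
  have h := DFunLike.congr_fun (sumAlgEquiv_comp_rename_inl (R := ℝ) (S₁ := S₁) (S₂ := S₂))
    (esymm S₁ ℝ k)
  simp only [AlgHom.comp_apply, AlgEquiv.toAlgHom_eq_coe, AlgHom.coe_coe] at h
  erw [h]
  show _ = map (Algebra.ofId ℝ (MvPolynomial S₂ ℝ)).toRingHom (esymm S₁ ℝ k)
  rw [map_esymm]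


end SumEquiv

variable {n r : ℕ}
lemma P3 (hrn : r ≤ n) (q : MvPolynomial (Fin n) ℝ)
    (hq : ∀ σ : Equiv.Perm (Fin n),
      (∀ i : Fin n, (i : ℕ) < r → ((σ i : Fin n) : ℕ) < r) → rename σ q = q) :
    q ∈ Algebra.adjoin ℝ
      ({x | ∃ k : ℕ, 1 ≤ k ∧ k ≤ r ∧
          x = rename (Subtype.val : {i : Fin n // (i : ℕ) < r} → Fin n)
            (esymm {i : Fin n // (i : ℕ) < r} ℝ k)} ∪
       {x | ∃ k : ℕ, 1 ≤ k ∧ k ≤ n - r ∧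
          x = rename (Subtype.val : {i : Fin n // ¬ (i : ℕ) < r} → Fin n)
            (esymm {i : Fin n // ¬ (i : ℕ) < r} ℝ k)}) := by
  classical
  set A := {i : Fin n // (i : ℕ) < r} with hA
  set B := {i : Fin n // ¬ (i : ℕ) < r} with hB
  let e : A ⊕ B ≃ Fin n := Equiv.sumCompl (fun i : Fin n => (i : ℕ) < r)
  set q1 : MvPolynomial (A ⊕ B) ℝ := rename (⇑e.symm) q with hq1def
  have hq_back : q = rename (⇑e) q1 := by
    rw [hq1def, rename_rename, Equiv.self_comp_symm, rename_id, AlgHom.id_apply]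
  -- invariance of q1 under block permutations
  have hq1inv : ∀ (π : Equiv.Perm A) (ρ : Equiv.Perm B),
      rename (Equiv.sumCongr π ρ) q1 = q1 := by
    intro π ρ
    set σ : Equiv.Perm (Fin n) := (e.symm.trans ((Equiv.sumCongr π ρ).trans e)) with hσdef
    have hσ : ∀ i : Fin n, (i : ℕ) < r → ((σ i : Fin n) : ℕ) < r := by
      intro i hi
      have h1 : e.symm i = Sum.inl ⟨i, hi⟩ :=
        Equiv.sumCompl_symm_apply_of_pos (p := fun i : Fin n => (i : ℕ) < r) hi
      have h2 : σ i = (π ⟨i, hi⟩ : A).val := by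
        show e ((Equiv.sumCongr π ρ) (e.symm i)) = _
        rw [h1]
        rfl
      rw [h2]
      exact (π ⟨i, hi⟩).2
    have hfun : ⇑(Equiv.sumCongr π ρ) ∘ ⇑e.symm = ⇑e.symm ∘ ⇑σ := by
      funext i
      simp [hσdef]
    rw [hq1def, rename_rename, hfun, ← rename_rename, hq σ hσ]
  set q2 : MvPolynomial A (MvPolynomial B ℝ) := (sumAlgEquiv ℝ A B) q1 with hq2def
  have hsym : (q2 : MvPolynomial A (MvPolynomial B ℝ)).IsSymmetric := by
    intro π
    rw [hq2def, ← sumAlgEquiv_rename_left π q1, hq1inv π (Equiv.refl B)]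
  have hcA : Fintype.card A = r := card_A hrn
  obtain ⟨w, hw⟩ := esymmAlgHom_surjective (σ := A) (R := (MvPolynomial B ℝ)) (n := r) hcA.le ⟨q2, hsym⟩
  have hq2w : q2 = eval₂ C (fun i : Fin r => esymm A (MvPolynomial B ℝ) ((i : ℕ) + 1)) w := by
    have h := congrArg Subtype.val hw
    rw [esymmAlgHom_apply] at h
    have h' : (aeval fun i : Fin r => esymm A (MvPolynomial B ℝ) ((i : ℕ) + 1)) w = q2 := h
    rw [← h', aeval_def, algebraMap_eq]
  -- coefficients of w are symmetric in the B variables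
  have hwfix : ∀ ρ : Equiv.Perm B,
      map (rename (R := ℝ) ⇑ρ).toRingHom w = w := by
    intro ρ
    have h1 : map (rename (R := ℝ) ⇑ρ).toRingHom q2 = q2 := by
      rw [hq2def, ← sumAlgEquiv_rename_right ρ q1, hq1inv (Equiv.refl A) ρ]
    have h2 : (map (rename (R := ℝ) ⇑ρ).toRingHom : MvPolynomial A (MvPolynomial B ℝ) →+* MvPolynomial A (MvPolynomial B ℝ))
          (eval₂ C (fun i : Fin r => esymm A (MvPolynomial B ℝ) ((i : ℕ) + 1)) w)
        = eval₂ C (fun i : Fin r => esymm A (MvPolynomial B ℝ) ((i : ℕ) + 1))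
            (map (rename (R := ℝ) ⇑ρ).toRingHom w) := by
      rw [eval₂_comp_left, eval₂_map]
      congr 1
      · exact RingHom.ext fun a => map_C _ a
      · funext i
        show (MvPolynomial.map (rename (R := ℝ) ⇑ρ).toRingHom)
            (esymm A (MvPolynomial B ℝ) ((i : ℕ) + 1)) = esymm A (MvPolynomial B ℝ) ((i : ℕ) + 1)
        rw [map_esymm]
    rw [hq2w] at h1
    rw [h2] at h1
    have hinj : Function.Injective (esymmAlgHom A (MvPolynomial B ℝ) r) :=
      esymmAlgHom_injective _ hcA.ge
    apply hinj
    apply Subtype.ext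
    rw [esymmAlgHom_apply, esymmAlgHom_apply, aeval_def, algebraMap_eq, aeval_def, algebraMap_eq]
    rw [h1, ← hq2w]
  -- hence each coefficient lies in the subalgebra generated by esymm of B
  have hwmem : ∀ d : Fin r →₀ ℕ, coeff d w ∈ Algebra.adjoin ℝ
      {x : (MvPolynomial B ℝ) | ∃ k : ℕ, 1 ≤ k ∧ k ≤ n - r ∧ x = esymm B ℝ k} := by
    intro d
    have hsymc : (coeff d w).IsSymmetric := by
      intro ρ
      have := hwfix ρ
      conv_rhs => rw [← this]
      rw [coeff_map]
      rfl
    have hcB : Fintype.card B = n - r := card_B hrn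
    obtain ⟨u, hu⟩ := esymmAlgHom_surjective (σ := B) (R := ℝ) (n := n - r) hcB.le
      ⟨coeff d w, hsymc⟩
    have h := congrArg Subtype.val hu
    rw [esymmAlgHom_apply] at h
    have h' : (aeval fun i : Fin (n - r) => esymm B ℝ ((i : ℕ) + 1)) u = coeff d w := h
    rw [← h']
    have h5 : aeval (fun i : Fin (n - r) => esymm B ℝ ((i : ℕ) + 1)) u ∈
        Algebra.adjoin ℝ (Set.range fun i : Fin (n - r) => esymm B ℝ ((i : ℕ) + 1)) := by
      rw [Algebra.adjoin_range_eq_range_aeval]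
      exact ⟨u, rfl⟩
    refine Algebra.adjoin_mono ?_ h5
    rintro x ⟨i, rfl⟩
    exact ⟨(i : ℕ) + 1, le_add_self, by omega, rfl⟩
  -- q2 lies in the adjoin of the two families
  set SA2 : Set (MvPolynomial A (MvPolynomial B ℝ)) := {x | ∃ k : ℕ, 1 ≤ k ∧ k ≤ r ∧ x = esymm A (MvPolynomial B ℝ) k}
    with hSA2
  set SB2 : Set (MvPolynomial A (MvPolynomial B ℝ)) :=
    {x | ∃ k : ℕ, 1 ≤ k ∧ k ≤ n - r ∧ x = C (esymm B ℝ k)} with hSB2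
  have hq2mem : q2 ∈ Algebra.adjoin ℝ (SA2 ∪ SB2) := by
    rw [hq2w, eval₂_eq]
    apply Subalgebra.sum_mem
    intro d _
    apply Subalgebra.mul_mem
    · let Calg : (MvPolynomial B ℝ) →ₐ[ℝ] MvPolynomial A (MvPolynomial B ℝ) := IsScalarTower.toAlgHom ℝ (MvPolynomial B ℝ) (MvPolynomial A (MvPolynomial B ℝ))
      have h6 : Calg (coeff d w) ∈
          (Algebra.adjoin ℝ {x : (MvPolynomial B ℝ) | ∃ k : ℕ, 1 ≤ k ∧ k ≤ n - r ∧ x = esymm B ℝ k}).map Calg :=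
        ⟨_, hwmem d, rfl⟩
      rw [AlgHom.map_adjoin] at h6
      have h7 : C (coeff d w) = Calg (coeff d w) := rfl
      rw [h7]
      refine Algebra.adjoin_mono ?_ h6
      rintro x ⟨y, ⟨k, h1k, hk, rfl⟩, rfl⟩
      right
      exact ⟨k, h1k, hk, rfl⟩
    · apply Subalgebra.prod_mem
      intro i _
      apply Subalgebra.pow_mem
      apply Algebra.subset_adjoin
      left
      exact ⟨(i : ℕ) + 1, le_add_self, by omega, rfl⟩
  -- transport back to `Fin n`
  let Ψ : MvPolynomial A (MvPolynomial B ℝ) →ₐ[ℝ] MvPolynomial (Fin n) ℝ :=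
    (rename (⇑e) : MvPolynomial (A ⊕ B) ℝ →ₐ[ℝ] MvPolynomial (Fin n) ℝ).comp
      ((sumAlgEquiv ℝ A B).symm : MvPolynomial A (MvPolynomial B ℝ) ≃ₐ[ℝ] MvPolynomial (A ⊕ B) ℝ).toAlgHom
  have hqΨ : q = Ψ q2 := by
    show q = rename (⇑e) ((sumAlgEquiv ℝ A B).symm q2)
    rw [hq2def, AlgEquiv.symm_apply_apply]
    exact hq_back
  rw [hqΨ]
  have h8 : Ψ q2 ∈ (Algebra.adjoin ℝ (SA2 ∪ SB2)).map Ψ := ⟨q2, hq2mem, rfl⟩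
  rw [AlgHom.map_adjoin] at h8
  refine Algebra.adjoin_mono ?_ h8
  rintro x ⟨y, hy, rfl⟩
  have heinl : ⇑e ∘ (Sum.inl : A → A ⊕ B) = (Subtype.val : A → Fin n) := rfl
  have heinr : ⇑e ∘ (Sum.inr : B → A ⊕ B) = (Subtype.val : B → Fin n) := rfl
  rcases hy with ⟨k, h1, h2, rfl⟩ | ⟨k, h1, h2, rfl⟩
  · left
    refine ⟨k, h1, h2, ?_⟩
    show rename (⇑e) ((sumAlgEquiv ℝ A B).symm (esymm A (MvPolynomial B ℝ) k)) = _
    rw [sumAlgEquiv_symm_esymm, rename_rename, heinl]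
  · right
    refine ⟨k, h1, h2, ?_⟩
    show rename (⇑e) ((sumAlgEquiv ℝ A B).symm (C (esymm B ℝ k))) = _
    rw [sumAlgEquiv_symm_C, rename_rename, heinr]


end Stmt14

open Stmt14 in
/-- Invariant theory of the subgroup `W(I) = Σ_r × (Σ_{n−r} ⋉ ℤ₂^{n−r})`
(the case of the varieties `Bₙ(r)`, `Cₙ(r)`): a polynomial `p ∈ ℝ[x₁,…,xₙ]`
is invariant under every permutation of the variables preserving the first
`r` of them, and under every sign change `τᵢ : xᵢ ↦ −xᵢ` of one of the last
`n − r` variables, if and only if `p` lies in the ℝ-subalgebra generated by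
the elementary symmetric polynomials `e_k(x₁,…,x_r)`, `1 ≤ k ≤ r`, together
with `e_k(x_{r+1}²,…,xₙ²)`, `1 ≤ k ≤ n − r`. -/
theorem stmt_14 (n r : ℕ) (hn : 1 ≤ n) (hr : 1 ≤ r) (hrn : r ≤ n)
    (p : MvPolynomial (Fin n) ℝ) :
    ((∀ σ : Equiv.Perm (Fin n),
        (∀ i : Fin n, (i : ℕ) < r → ((σ i : Fin n) : ℕ) < r) →
        rename σ p = p) ∧
      ∀ i : Fin n, r ≤ (i : ℕ) →
        aeval (fun j : Fin n =>
          if j = i then -X i else (X j : MvPolynomial (Fin n) ℝ)) p = p) ↔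
    p ∈ Algebra.adjoin ℝ
      {q : MvPolynomial (Fin n) ℝ |
        (∃ k : ℕ, 1 ≤ k ∧ k ≤ r ∧
          q = ∑ t ∈ Finset.powersetCard k
                ((Finset.univ : Finset (Fin n)).filter fun i : Fin n => (i : ℕ) < r),
                ∏ i ∈ t, (X i : MvPolynomial (Fin n) ℝ)) ∨
        (∃ k : ℕ, 1 ≤ k ∧ k ≤ n - r ∧
          q = ∑ t ∈ Finset.powersetCard k
                ((Finset.univ : Finset (Fin n)).filter fun i : Fin n => r ≤ (i : ℕ)),
                ∏ i ∈ t, (X i : MvPolynomial (Fin n) ℝ) ^ 2)} := by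
  constructor
  · rintro ⟨hperm, htau⟩
    have heven : ∀ m ∈ p.support, ∀ j : Fin n, ¬ (j : ℕ) < r → Even (m j) := by
      intro m hm j hj
      exact even_of_tau p j (htau j (not_lt.mp hj)) m hm
    obtain ⟨q, hq⟩ := exists_phi_pre (r := r) p heven
    have hqinv : ∀ σ : Equiv.Perm (Fin n),
        (∀ i : Fin n, (i : ℕ) < r → ((σ i : Fin n) : ℕ) < r) → rename σ q = q := by
      intro σ hσ
      apply Phi_injective n r
      rw [Phi_rename σ (perm_iff σ hσ), hq, hperm σ hσ]
    have hmem := P3 hrn q hqinv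
    rw [← hq]
    have h8 : Phi n r q ∈ (Algebra.adjoin ℝ
        ({x | ∃ k : ℕ, 1 ≤ k ∧ k ≤ r ∧
            x = rename (Subtype.val : {i : Fin n // (i : ℕ) < r} → Fin n)
              (esymm {i : Fin n // (i : ℕ) < r} ℝ k)} ∪
         {x | ∃ k : ℕ, 1 ≤ k ∧ k ≤ n - r ∧
            x = rename (Subtype.val : {i : Fin n // ¬ (i : ℕ) < r} → Fin n)
              (esymm {i : Fin n // ¬ (i : ℕ) < r} ℝ k)})).map (Phi n r) :=
      ⟨q, hmem, rfl⟩
    rw [AlgHom.map_adjoin] at h8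
    refine Algebra.adjoin_mono ?_ h8
    rintro x ⟨y, hy, rfl⟩
    rcases hy with ⟨k, h1, h2, rfl⟩ | ⟨k, h1, h2, rfl⟩
    · left
      refine ⟨k, h1, h2, ?_⟩
      rw [G1, PhiA]
      rfl
    · right
      refine ⟨k, h1, h2, ?_⟩
      rw [G2]
      rfl
  · intro hp
    constructor
    · intro σ hσ
      have hiff := perm_iff σ hσ
      have h : p ∈ AlgHom.equalizer
          (rename (R := ℝ) ⇑σ) (AlgHom.id ℝ (MvPolynomial (Fin n) ℝ)) := by
        refine Algebra.adjoin_le ?_ hp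
        rintro x (⟨k, h1, h2, rfl⟩ | ⟨k, h1, h2, rfl⟩)
        · show rename ⇑σ (genA n r k) = AlgHom.id ℝ _ (genA n r k)
          exact genA_rename σ hiff k
        · show rename ⇑σ (genB n r k) = AlgHom.id ℝ _ (genB n r k)
          exact genB_rename σ hiff k
      exact (AlgHom.mem_equalizer _ _ p).mp h
    · intro i hi
      have h : p ∈ AlgHom.equalizer
          (aeval (fun j : Fin n =>
            if j = i then -X i else (X j : MvPolynomial (Fin n) ℝ)))
          (AlgHom.id ℝ (MvPolynomial (Fin n) ℝ)) := by
        refine Algebra.adjoin_le ?_ hp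
        rintro x (⟨k, h1, h2, rfl⟩ | ⟨k, h1, h2, rfl⟩)
        · show aeval _ (genA n r k) = AlgHom.id ℝ _ (genA n r k)
          exact genA_tau i hi k
        · show aeval _ (genB n r k) = AlgHom.id ℝ _ (genB n r k)
          exact genB_tau i k
      exact (AlgHom.mem_equalizer _ _ p).mp h
end

section
/- Let n ≥ 1, let 1 ≤ r ≤ n, and let p ∈ ℝ[x₁,…,x_{n+1}] be a polynomial. Then p is fixed by renaming along every permutation of Fin (n+1) that maps the set of the first r indices to itself if and only if p belongs to the ℝ-subalgebra of ℝ[x₁,…,x_{n+1}] generated by the polynomials e_k(x₁,…,x_r) for 1 ≤ k ≤ r together with the polynomials e_k(x_{r+1},…,x_{n+1}) for 1 ≤ k ≤ n+1−r, where e_k denotes the k-th elementary symmetric polynomial in the indicated variables. -/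
open MvPolynomial


open MvPolynomial Finset

namespace Stmt15Aux

-- renaming an esymm along an injective map
lemma rename_esymm_inj {ι τ : Type*} [Fintype ι] [DecidableEq ι] [DecidableEq τ] {f : ι → τ}
    (hf : Function.Injective f) (k : ℕ) :
    rename f (esymm ι ℝ k) =
      ∑ t ∈ Finset.powersetCard k (Finset.univ.image f),
        ∏ i ∈ t, (X i : MvPolynomial τ ℝ) := by
  classical
  rw [esymm, map_sum]
  refine Finset.sum_bij (fun t _ => t.image f) ?_ ?_ ?_ ?_
  · intro t ht
    rw [mem_powersetCard] at ht ⊢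
    exact ⟨Finset.image_subset_image ht.1, by rw [Finset.card_image_of_injective _ hf, ht.2]⟩
  · intro t₁ h₁ t₂ h₂ h
    exact Finset.image_injective hf h
  · intro s hs
    rw [mem_powersetCard] at hs
    obtain ⟨u, hu, rfl⟩ := Finset.subset_image_iff.mp hs.1
    exact ⟨u, mem_powersetCard.mpr ⟨hu, by
      have := hs.2; rwa [Finset.card_image_of_injective _ hf] at this⟩, rfl⟩
  · intro t ht
    rw [map_prod]
    simp only [rename_X]
    exact (Finset.prod_image fun a _ b _ h => hf h).symm

-- invariance of the "esymm of a σ-stable finset" under rename σ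
lemma rename_sum_powersetCard {ι : Type*} [Fintype ι] [DecidableEq ι]
    (σ : Equiv.Perm ι) (S : Finset ι) (hS : S.image σ = S) (k : ℕ) :
    rename (⇑σ) (∑ t ∈ S.powersetCard k, ∏ i ∈ t, (X i : MvPolynomial ι ℝ)) =
      ∑ t ∈ S.powersetCard k, ∏ i ∈ t, X i := by
  classical
  rw [map_sum]
  refine Finset.sum_bij (fun t _ => t.image σ) ?_ ?_ ?_ ?_
  · intro t ht
    rw [mem_powersetCard] at ht ⊢
    refine ⟨?_, by rw [Finset.card_image_of_injective _ σ.injective, ht.2]⟩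
    calc t.image σ ⊆ S.image σ := Finset.image_subset_image ht.1
      _ = S := hS
  · intro t₁ h₁ t₂ h₂ h
    exact Finset.image_injective σ.injective h
  · intro s hs
    rw [mem_powersetCard] at hs
    refine ⟨s.image σ.symm, mem_powersetCard.mpr ⟨?_, ?_⟩, ?_⟩
    · intro x hx
      simp only [Finset.mem_image] at hx
      obtain ⟨y, hy, rfl⟩ := hx
      have hyS : y ∈ S := hs.1 hy
      rw [← hS] at hyS
      obtain ⟨z, hz, rfl⟩ := Finset.mem_image.mp hyS
      rwa [Equiv.symm_apply_apply]
    · rw [Finset.card_image_of_injective _ σ.symm.injective, hs.2]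
    · rw [Finset.image_image, Equiv.self_comp_symm, Finset.image_id]
  · intro t ht
    rw [map_prod]
    simp only [rename_X]
    exact (Finset.prod_image fun a _ b _ h => σ.injective h).symm

end Stmt15Aux



namespace Stmt15Core

variable (r m : ℕ)

noncomputable abbrev Calg : MvPolynomial (Fin m) ℝ →ₐ[ℝ]
    MvPolynomial (Fin r) (MvPolynomial (Fin m) ℝ) :=
  IsScalarTower.toAlgHom ℝ (MvPolynomial (Fin m) ℝ) _

lemma mem_adjoin_of_invariant (P : MvPolynomial (Fin r ⊕ Fin m) ℝ)
    (hP : ∀ (πA : Equiv.Perm (Fin r)) (πB : Equiv.Perm (Fin m)),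
      rename (⇑(Equiv.sumCongr πA πB)) P = P) :
    P ∈ Algebra.adjoin ℝ
      ((Set.range fun k : Fin r => rename Sum.inl (esymm (Fin r) ℝ ((k : ℕ) + 1))) ∪
       (Set.range fun k : Fin m => rename Sum.inr (esymm (Fin m) ℝ ((k : ℕ) + 1)))) := by
  classical
  set S := MvPolynomial (Fin m) ℝ with hSdef
  set Ψ := sumAlgEquiv ℝ (Fin r) (Fin m) with hΨdef
  set Q := Ψ P with hQdef
  -- symmetry in the first block
  have hsymA : ∀ πA : Equiv.Perm (Fin r), rename (⇑πA) Q = Q := by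
    intro πA
    have hcomp : Ψ.toAlgHom.comp (rename (⇑(Equiv.sumCongr πA (Equiv.refl (Fin m))))) =
        ((rename (R := S) (⇑πA)).restrictScalars ℝ).comp Ψ.toAlgHom := by
      apply algHom_ext
      rintro (a | b) <;> simp [Ψ]
    have := DFunLike.congr_fun hcomp P
    simp only [AlgHom.coe_comp, Function.comp_apply, AlgHom.coe_restrictScalars',
      AlgEquiv.toAlgHom_eq_coe, AlgHom.coe_coe] at this
    rw [hP πA (Equiv.refl (Fin m))] at this
    exact this.symm
  have hQsym : Q.IsSymmetric := fun πA => hsymA πA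
  -- symmetry in the second block: coefficients of `Q`
  have hmapB : ∀ πB : Equiv.Perm (Fin m),
      MvPolynomial.map (↑(rename (R := ℝ) (⇑πB)) : S →+* S) Q = Q := by
    intro πB
    have hcomp : Ψ.toAlgHom.comp (rename (⇑(Equiv.sumCongr (Equiv.refl (Fin r)) πB))) =
        (MvPolynomial.mapAlgHom (R := ℝ) (σ := Fin r)
          (rename (⇑πB) : S →ₐ[ℝ] S)).comp Ψ.toAlgHom := by
      apply algHom_ext
      rintro (a | b) <;> simp [Ψ]
    have := DFunLike.congr_fun hcomp P
    simp only [AlgHom.coe_comp, Function.comp_apply, AlgEquiv.toAlgHom_eq_coe,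
      AlgHom.coe_coe, mapAlgHom_apply] at this
    rw [hP (Equiv.refl (Fin r)) πB] at this
    exact this.symm
  -- fundamental theorem in the first block, over the base ring `S`
  have hcardr : Fintype.card (Fin r) = r := Fintype.card_fin r
  set u : MvPolynomial (Fin r) S :=
    (esymmAlgEquiv (Fin r) S hcardr).symm ⟨Q, hQsym⟩ with hudef
  have hu : aeval (fun i : Fin r => esymm (Fin r) S ((i : ℕ) + 1)) u = Q := by
    have h1 := (esymmAlgEquiv (Fin r) S hcardr).apply_symm_apply ⟨Q, hQsym⟩
    have h2 := congrArg Subtype.val h1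
    rw [esymmAlgEquiv_apply, esymmAlgHom_apply] at h2
    exact h2
  -- coefficients of u are invariant
  have hmapu : ∀ πB : Equiv.Perm (Fin m),
      MvPolynomial.map (↑(rename (R := ℝ) (⇑πB)) : S →+* S) u = u := by
    intro πB
    set fπ : S →+* S := ↑(rename (R := ℝ) (⇑πB))
    have hv : ∀ i : Fin r, MvPolynomial.map fπ (esymm (Fin r) S ((i : ℕ) + 1)) =
        esymm (Fin r) S ((i : ℕ) + 1) := by
      intro i
      rw [esymm, map_sum]
      refine Finset.sum_congr rfl fun t _ => ?_
      rw [map_prod]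
      refine Finset.prod_congr rfl fun j _ => ?_
      rw [MvPolynomial.map_X]
    have key : ∀ w : MvPolynomial (Fin r) S,
        MvPolynomial.map fπ (aeval (fun i : Fin r => esymm (Fin r) S ((i : ℕ) + 1)) w) =
          aeval (fun i : Fin r => esymm (Fin r) S ((i : ℕ) + 1)) (MvPolynomial.map fπ w) := by
      intro w
      induction w using MvPolynomial.induction_on with
      | C s =>
        rw [aeval_C, MvPolynomial.map_C, aeval_C]
        simp only [MvPolynomial.algebraMap_eq, MvPolynomial.map_C]
      | add p q hp hq => simp only [map_add, hp, hq]
      | mul_X p i hp => simp only [map_mul, MvPolynomial.map_X, aeval_X, hp, hv]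
    apply esymmAlgHom_injective (R := S) (σ := Fin r) (n := r) hcardr.ge
    apply Subtype.ext
    rw [esymmAlgHom_apply, esymmAlgHom_apply, ← key, hu, hmapB]
  have hcoeffu : ∀ d : Fin r →₀ ℕ, (MvPolynomial.coeff d u).IsSymmetric := by
    intro d πB
    have := congrArg (MvPolynomial.coeff d) (hmapu πB)
    rwa [MvPolynomial.coeff_map] at this
  -- coefficients lie in the adjoin of the esymms of the second block
  have hcoeffmem : ∀ d : Fin r →₀ ℕ, MvPolynomial.coeff d u ∈
      Algebra.adjoin ℝ (Set.range fun k : Fin m => esymm (Fin m) ℝ ((k : ℕ) + 1)) := by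
    intro d
    obtain ⟨w, hw⟩ := esymmAlgHom_surjective (σ := Fin m) (n := m) ℝ
      (Fintype.card_fin m).le ⟨MvPolynomial.coeff d u, hcoeffu d⟩
    have hw' : aeval (fun i : Fin m => esymm (Fin m) ℝ ((i : ℕ) + 1)) w =
        MvPolynomial.coeff d u := by
      have h2 := congrArg Subtype.val hw
      rw [esymmAlgHom_apply] at h2
      exact h2
    rw [← hw']
    rw [Algebra.adjoin_range_eq_range_aeval]
    exact ⟨w, rfl⟩
  -- assemble: Q lies in the adjoin of the block esymms over S
  set GQ : Set (MvPolynomial (Fin r) S) :=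
    (Set.range fun k : Fin r => esymm (Fin r) S ((k : ℕ) + 1)) ∪
      ((Calg r m) '' (Set.range fun k : Fin m => esymm (Fin m) ℝ ((k : ℕ) + 1))) with hGQ
  have hQmem : Q ∈ Algebra.adjoin ℝ GQ := by
    rw [← hu, aeval_def, eval₂_eq]
    refine Subalgebra.sum_mem _ fun d _ => ?_
    refine mul_mem ?_ ?_
    · have h1 : (Calg r m) (MvPolynomial.coeff d u) ∈
          Algebra.adjoin ℝ ((Calg r m) '' (Set.range fun k : Fin m =>
            esymm (Fin m) ℝ ((k : ℕ) + 1))) := by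
        rw [Algebra.adjoin_image]
        exact Subalgebra.mem_map.mpr ⟨_, hcoeffmem d, rfl⟩
      refine Algebra.adjoin_mono (Set.subset_union_right) ?_
      exact h1
    · refine Subalgebra.prod_mem _ fun i _ => ?_
      refine pow_mem ?_ _
      exact Algebra.subset_adjoin (Set.mem_union_left _ ⟨i, rfl⟩)
  -- transport back along Ψ
  have himg : Ψ.symm '' GQ ⊆
      ((Set.range fun k : Fin r => rename Sum.inl (esymm (Fin r) ℝ ((k : ℕ) + 1))) ∪
       (Set.range fun k : Fin m => rename Sum.inr (esymm (Fin m) ℝ ((k : ℕ) + 1)))) := by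
    rintro q ⟨g, hg, rfl⟩
    rcases hg with ⟨k, rfl⟩ | ⟨g', ⟨k, rfl⟩, rfl⟩
    · left
      refine ⟨k, ?_⟩
      apply Ψ.injective
      rw [AlgEquiv.apply_symm_apply]
      have h := DFunLike.congr_fun (sumAlgEquiv_comp_rename_inl ℝ (Fin r) (Fin m))
        (esymm (Fin r) ℝ ((k : ℕ) + 1))
      simp only [AlgHom.coe_comp, Function.comp_apply, AlgEquiv.toAlgHom_eq_coe,
        AlgHom.coe_coe] at h
      refine h.trans ?_
      have h2 : (mapAlgHom (R := ℝ) (σ := Fin r) (Algebra.ofId ℝ S))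
          (esymm (Fin r) ℝ ((k : ℕ) + 1)) =
          MvPolynomial.map ((Algebra.ofId ℝ S : ℝ →ₐ[ℝ] S) : ℝ →+* S)
            (esymm (Fin r) ℝ ((k : ℕ) + 1)) := rfl
      rw [h2, show ((Algebra.ofId ℝ S : ℝ →ₐ[ℝ] S) : ℝ →+* S) = (C : ℝ →+* S) from rfl,
        map_esymm]
    · right
      refine ⟨k, ?_⟩
      apply Ψ.injective
      rw [AlgEquiv.apply_symm_apply]
      have h := DFunLike.congr_fun (sumAlgEquiv_comp_rename_inr ℝ (Fin r) (Fin m))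
        (esymm (Fin m) ℝ ((k : ℕ) + 1))
      simp only [AlgHom.coe_comp, Function.comp_apply, AlgEquiv.toAlgHom_eq_coe,
        AlgHom.coe_coe] at h
      exact h
  have hPQ : P = Ψ.symm Q := by rw [hQdef, AlgEquiv.symm_apply_apply]
  rw [hPQ]
  refine Algebra.adjoin_mono himg ?_
  have hmem : Ψ.symm Q ∈ (Algebra.adjoin ℝ GQ).map Ψ.symm.toAlgHom :=
    Subalgebra.mem_map.mpr ⟨Q, hQmem, rfl⟩
  rw [AlgHom.map_adjoin] at hmem
  have hcoe : (⇑Ψ.symm.toAlgHom : MvPolynomial (Fin r) S → MvPolynomial (Fin r ⊕ Fin m) ℝ)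
      = ⇑Ψ.symm := rfl
  rwa [hcoe] at hmem

end Stmt15Core


/-- Invariant theory of the subgroup `W(I) = Σ_r × Σ_{n+1−r}` of `Σ_{n+1}`
(the case of the Grassmannian `Aₙ(r)`): a polynomial `p ∈ ℝ[x₁,…,x_{n+1}]`
is invariant under every permutation of the variables preserving the first
`r` of them if and only if `p` lies in the ℝ-subalgebra generated by the
elementary symmetric polynomials `e_k(x₁,…,x_r)`, `1 ≤ k ≤ r`, together with
`e_k(x_{r+1},…,x_{n+1})`, `1 ≤ k ≤ n + 1 − r`. -/
theorem stmt_15 (n r : ℕ) (hn : 1 ≤ n) (hr : 1 ≤ r) (hrn : r ≤ n)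
    (p : MvPolynomial (Fin (n + 1)) ℝ) :
    (∀ σ : Equiv.Perm (Fin (n + 1)),
        (∀ i : Fin (n + 1), (i : ℕ) < r → ((σ i : Fin (n + 1)) : ℕ) < r) →
        rename σ p = p) ↔
    p ∈ Algebra.adjoin ℝ
      {q : MvPolynomial (Fin (n + 1)) ℝ |
        (∃ k : ℕ, 1 ≤ k ∧ k ≤ r ∧
          q = ∑ t ∈ Finset.powersetCard k
                ((Finset.univ : Finset (Fin (n + 1))).filter fun i : Fin (n + 1) => (i : ℕ) < r),
                ∏ i ∈ t, (X i : MvPolynomial (Fin (n + 1)) ℝ)) ∨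
        (∃ k : ℕ, 1 ≤ k ∧ k ≤ n + 1 - r ∧
          q = ∑ t ∈ Finset.powersetCard k
                ((Finset.univ : Finset (Fin (n + 1))).filter fun i : Fin (n + 1) => r ≤ (i : ℕ)),
                ∏ i ∈ t, (X i : MvPolynomial (Fin (n + 1)) ℝ))} := by
  set S₁ : Finset (Fin (n + 1)) :=
    (Finset.univ : Finset (Fin (n + 1))).filter (fun i : Fin (n + 1) => (i : ℕ) < r) with hS₁def
  set S₂ : Finset (Fin (n + 1)) :=
    (Finset.univ : Finset (Fin (n + 1))).filter (fun i : Fin (n + 1) => r ≤ (i : ℕ)) with hS₂def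
  set m := n + 1 - r with hmdef
  have hrm : r + m = n + 1 := by omega
  set e : Fin r ⊕ Fin m ≃ Fin (n + 1) := finSumFinEquiv.trans (finCongr hrm) with hedef
  have he_inl : ∀ a : Fin r, ((e (Sum.inl a) : Fin (n + 1)) : ℕ) = (a : ℕ) := by
    intro a
    simp [e, finCongr_apply]
  have he_inr : ∀ b : Fin m, ((e (Sum.inr b) : Fin (n + 1)) : ℕ) = r + (b : ℕ) := by
    intro b
    simp [e, finCongr_apply]
  have hS1 : Finset.univ.image (⇑e ∘ Sum.inl) = S₁ := by
    ext i
    simp only [Finset.mem_image, hS₁def, Finset.mem_filter, Finset.mem_univ, true_and,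
      Function.comp_apply]
    constructor
    · rintro ⟨a, rfl⟩
      rw [he_inl]; exact a.2
    · intro hi
      refine ⟨⟨(i : ℕ), hi⟩, ?_⟩
      apply Fin.ext
      rw [he_inl]
  have hS2 : Finset.univ.image (⇑e ∘ Sum.inr) = S₂ := by
    ext i
    simp only [Finset.mem_image, hS₂def, Finset.mem_filter, Finset.mem_univ, true_and,
      Function.comp_apply]
    constructor
    · rintro ⟨b, rfl⟩
      rw [he_inr]; exact Nat.le_add_right _ _
    · intro hi
      have hib : (i : ℕ) - r < m := by omega
      refine ⟨⟨(i : ℕ) - r, hib⟩, ?_⟩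
      apply Fin.ext
      rw [he_inr]
      simp only
      omega
  constructor
  · -- hard direction
    intro hinv
    set P : MvPolynomial (Fin r ⊕ Fin m) ℝ := rename ⇑e.symm p with hPdef
    have hP : ∀ (πA : Equiv.Perm (Fin r)) (πB : Equiv.Perm (Fin m)),
        rename (⇑(Equiv.sumCongr πA πB)) P = P := by
      intro πA πB
      set σ : Equiv.Perm (Fin (n + 1)) :=
        (e.symm.trans ((Equiv.sumCongr πA πB).trans e)) with hσdef
      have hσ : ∀ i : Fin (n + 1), (i : ℕ) < r → ((σ i : Fin (n + 1)) : ℕ) < r := by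
        intro i hi
        have hsymm : e.symm i = Sum.inl ⟨(i : ℕ), hi⟩ := by
          apply e.injective
          rw [Equiv.apply_symm_apply]
          apply Fin.ext
          rw [he_inl]
        have : σ i = e (Sum.inl (πA ⟨(i : ℕ), hi⟩)) := by
          simp [hσdef, Equiv.trans_apply, hsymm]
        rw [this, he_inl]
        exact (πA ⟨(i : ℕ), hi⟩).2
      have h1 := hinv σ hσ
      calc rename (⇑(Equiv.sumCongr πA πB)) P
          = rename (⇑(Equiv.sumCongr πA πB) ∘ ⇑e.symm) p := by
            rw [hPdef, rename_rename]
        _ = rename (⇑e.symm ∘ ⇑σ) p := by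
            have hfun : ⇑(Equiv.sumCongr πA πB) ∘ ⇑e.symm = ⇑e.symm ∘ ⇑σ := by
              funext i
              simp [hσdef, Equiv.trans_apply, Equiv.symm_apply_apply]
            rw [hfun]
        _ = rename ⇑e.symm (rename ⇑σ p) := (rename_rename _ _ p).symm
        _ = P := by rw [h1]
    have hPmem := Stmt15Core.mem_adjoin_of_invariant r m P hP
    have hpP : p = rename ⇑e P := by
      rw [hPdef, rename_rename, Equiv.self_comp_symm, rename_id, AlgHom.id_apply]
    rw [hpP]
    have hmem : rename ⇑e P ∈
        (Algebra.adjoin ℝ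
          ((Set.range fun k : Fin r => rename Sum.inl (esymm (Fin r) ℝ ((k : ℕ) + 1))) ∪
           (Set.range fun k : Fin m =>
              rename Sum.inr (esymm (Fin m) ℝ ((k : ℕ) + 1))))).map (rename ⇑e) :=
      Subalgebra.mem_map.mpr ⟨P, hPmem, rfl⟩
    rw [AlgHom.map_adjoin] at hmem
    refine Algebra.adjoin_mono ?_ hmem
    rintro q ⟨g, (⟨k, rfl⟩ | ⟨k, rfl⟩), rfl⟩
    · left
      refine ⟨(k : ℕ) + 1, Nat.succ_le_succ (Nat.zero_le _), Nat.succ_le_of_lt k.2, ?_⟩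
      have hinj : Function.Injective (⇑e ∘ Sum.inl) := e.injective.comp Sum.inl_injective
      rw [rename_rename, Stmt15Aux.rename_esymm_inj hinj ((k : ℕ) + 1), hS1]
    · right
      refine ⟨(k : ℕ) + 1, Nat.succ_le_succ (Nat.zero_le _), Nat.succ_le_of_lt k.2, ?_⟩
      have hinj : Function.Injective (⇑e ∘ Sum.inr) := e.injective.comp Sum.inr_injective
      rw [rename_rename, Stmt15Aux.rename_esymm_inj hinj ((k : ℕ) + 1), hS2]
  · -- easy direction
    intro hmem σ hσ
    have hone : S₁.image ⇑σ = S₁ := by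
      apply Finset.eq_of_subset_of_card_le
      · intro x hx
        obtain ⟨j, hj, rfl⟩ := Finset.mem_image.mp hx
        rw [hS₁def, Finset.mem_filter] at hj ⊢
        exact ⟨Finset.mem_univ _, hσ j hj.2⟩
      · exact (Finset.card_image_of_injective _ σ.injective).ge
    have htwo : S₂.image ⇑σ = S₂ := by
      apply Finset.eq_of_subset_of_card_le
      · intro x hx
        obtain ⟨j, hj, rfl⟩ := Finset.mem_image.mp hx
        rw [hS₂def, Finset.mem_filter] at hj ⊢
        refine ⟨Finset.mem_univ _, ?_⟩
        by_contra hcon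
        have hσjr : ((σ j : Fin (n + 1)) : ℕ) < r := by omega
        have hmem1 : σ j ∈ S₁ := by
          rw [hS₁def, Finset.mem_filter]
          exact ⟨Finset.mem_univ _, hσjr⟩
        rw [← hone] at hmem1
        obtain ⟨j', hj', hj'eq⟩ := Finset.mem_image.mp hmem1
        have : j' = j := σ.injective hj'eq
        subst this
        rw [hS₁def, Finset.mem_filter] at hj'
        omega
      · exact (Finset.card_image_of_injective _ σ.injective).ge
    have hsub : {q : MvPolynomial (Fin (n + 1)) ℝ |
        (∃ k : ℕ, 1 ≤ k ∧ k ≤ r ∧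
          q = ∑ t ∈ Finset.powersetCard k S₁, ∏ i ∈ t, (X i : MvPolynomial (Fin (n + 1)) ℝ)) ∨
        (∃ k : ℕ, 1 ≤ k ∧ k ≤ n + 1 - r ∧
          q = ∑ t ∈ Finset.powersetCard k S₂, ∏ i ∈ t, (X i : MvPolynomial (Fin (n + 1)) ℝ))} ⊆
        ↑(AlgHom.equalizer (rename ⇑σ) (AlgHom.id ℝ (MvPolynomial (Fin (n + 1)) ℝ))) := by
      rintro q (⟨k, -, -, rfl⟩ | ⟨k, -, -, rfl⟩)
      · exact Stmt15Aux.rename_sum_powersetCard σ S₁ hone k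
      · exact Stmt15Aux.rename_sum_powersetCard σ S₂ htwo k
    exact Algebra.adjoin_le hsub hmem
end

section
/- For every integer n ≥ 1, set N = 3·⌊n/2⌋ + 3. There exist polynomials f₁,…,f_N ∈ ℂ[x₀,…,x_n], each homogeneous of degree 2, and a symmetric invertible N×N matrix M over ℂ, such that: (a) the only common zero of f₁,…,f_N in ℂ^{n+1} is the origin; and (b) the identity Σ_{i,j} M_{ij}·f_i·f_j = 0 holds in ℂ[x₀,…,x_n]. -/
open MvPolynomial

/-- The symmetric invertible 3×3 block used in the construction:
`!![0,1,0; 1,0,0; 0,0,-2]`, which gives the identity `2·u²·v² − 2·(uv)² = 0`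
on the triple of quadrics `(u², v², uv)`. -/
noncomputable def B3 : Matrix (Fin 3) (Fin 3) ℂ := fun i j =>
  if (i = 0 ∧ j = 1) ∨ (i = 1 ∧ j = 0) then 1 else if i = 2 ∧ j = 2 then -2 else 0

theorem B3_isSymm : B3.IsSymm := by
  ext i j; fin_cases i <;> fin_cases j <;> simp [B3, Matrix.transpose_apply]

theorem B3_det : B3.det = 2 := by
  simp [Matrix.det_fin_three, B3]

/-- Example 6.4 of the paper: for every `n ≥ 1`, with `N = 3⌊n/2⌋ + 3`, there
exist `N` homogeneous quadrics `f₁,…,f_N ∈ ℂ[x₀,…,xₙ]` whose only common zero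
is the origin, and a symmetric invertible `N×N` complex matrix `M` such that
`Σ_{i,j} M_{ij}·fᵢ·fⱼ = 0`.  (This encodes a nonconstant morphism
`ℙⁿ → Q^{3⌊n/2⌋+1}` to a smooth quadric.) -/
theorem stmt_16 (n : ℕ) (hn : 1 ≤ n) :
    ∃ (f : Fin (3 * (n / 2) + 3) → MvPolynomial (Fin (n + 1)) ℂ)
      (M : Matrix (Fin (3 * (n / 2) + 3)) (Fin (3 * (n / 2) + 3)) ℂ),
      (∀ i, (f i).IsHomogeneous 2) ∧
      M.IsSymm ∧
      IsUnit M ∧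
      (∀ v : Fin (n + 1) → ℂ, (∀ i, eval v (f i) = 0) → v = 0) ∧
      (∑ i, ∑ j, C (M i j) * f i * f j = 0) := by
  set m := n / 2 with hm
  have e : Fin 3 × Fin (m + 1) ≃ Fin (3 * m + 3) :=
    finProdFinEquiv.trans (finCongr (by ring))
  have ha1 : ∀ k : Fin (m + 1), min (2 * k.1) n < n + 1 := fun k => by omega
  have ha2 : ∀ k : Fin (m + 1), min (2 * k.1 + 1) n < n + 1 := fun k => by omega
  set a1 : Fin (m + 1) → Fin (n + 1) := fun k => ⟨min (2 * k.1) n, ha1 k⟩ with ha1d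
  set a2 : Fin (m + 1) → Fin (n + 1) := fun k => ⟨min (2 * k.1 + 1) n, ha2 k⟩ with ha2d
  set u : Fin 3 × Fin (m + 1) → Fin (n + 1) := fun p => if p.1 = 1 then a2 p.2 else a1 p.2
    with hu
  set w : Fin 3 × Fin (m + 1) → Fin (n + 1) := fun p => if p.1 = 0 then a1 p.2 else a2 p.2
    with hw
  set g : Fin 3 × Fin (m + 1) → MvPolynomial (Fin (n + 1)) ℂ := fun p => X (u p) * X (w p)
    with hg
  set D : Matrix (Fin 3 × Fin (m + 1)) (Fin 3 × Fin (m + 1)) ℂ :=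
    Matrix.blockDiagonal (fun _ : Fin (m + 1) => B3) with hD
  refine ⟨fun i => g (e.symm i), Matrix.reindex e e D, ?_, ?_, ?_, ?_, ?_⟩
  · intro i
    exact (isHomogeneous_X ℂ _).mul (isHomogeneous_X ℂ _)
  · have hDsym : D.IsSymm := by
      ext ⟨a, k⟩ ⟨b, l⟩
      simp only [hD, Matrix.transpose_apply, Matrix.blockDiagonal_apply]
      rcases eq_or_ne k l with h | h
      · subst h; simp [← B3_isSymm.apply a b]
      · simp [h, Ne.symm h]
    simpa [Matrix.reindex_apply] using hDsym.submatrix e.symm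
  · rw [Matrix.isUnit_iff_isUnit_det, Matrix.reindex_apply, ← Matrix.reindex_apply,
      Matrix.det_reindex_self, hD, Matrix.det_blockDiagonal]
    simp [B3_det, isUnit_iff_ne_zero]
  · intro v hv
    funext j
    have hk : j.1 / 2 < m + 1 := by
      have h2 := j.2
      have : j.1 / 2 ≤ n / 2 := Nat.div_le_div_right (by omega)
      omega
    set k : Fin (m + 1) := ⟨j.1 / 2, hk⟩ with hkdef
    rcases Nat.even_or_odd j.1 with he | ho
    · have h0 := hv (e (0, k))
      have hjj : a1 k = j := by
        ext
        simp only [ha1d]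
        obtain ⟨t, ht⟩ := he
        have := j.2
        have hkv : (k : ℕ) = j.1 / 2 := rfl
        omega
      simp only [Equiv.symm_apply_apply, hg, hu, hw, eval_mul, eval_X] at h0
      simp only [show ((0 : Fin 3) = 1) = False by simp, show ((0 : Fin 3) = 0) = True by simp,
        if_false, if_true, hjj] at h0
      exact mul_self_eq_zero.mp h0
    · have h0 := hv (e (1, k))
      have hjj : a2 k = j := by
        ext
        simp only [ha2d]
        obtain ⟨t, ht⟩ := ho
        have := j.2
        have hkv : (k : ℕ) = j.1 / 2 := rfl
        omega
      simp only [Equiv.symm_apply_apply, hg, hu, hw, eval_mul, eval_X] at h0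
      simp only [show ((1 : Fin 3) = 1) = True by simp, show ((1 : Fin 3) = 0) = False by simp,
        if_false, if_true, hjj] at h0
      exact mul_self_eq_zero.mp h0
  · have block : ∀ k : Fin (m + 1),
        ∑ a : Fin 3, ∑ b : Fin 3, C (B3 a b) * g (a, k) * g (b, k) = 0 := by
      intro k
      simp only [Fin.sum_univ_three, B3, hg, hu, hw,
        show ((0:Fin 3) = 0) = True by simp, show ((0:Fin 3) = 1) = False by simp,
        show ((0:Fin 3) = 2) = False by simp, show ((1:Fin 3) = 0) = False by simp,
        show ((1:Fin 3) = 1) = True by simp, show ((1:Fin 3) = 2) = False by simp,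
        show ((2:Fin 3) = 0) = False by simp, show ((2:Fin 3) = 1) = False by simp,
        show ((2:Fin 3) = 2) = True by simp, if_true, if_false, true_and, false_and, and_true,
        and_false, true_or, or_true, false_or, or_false, map_one, map_zero, map_neg, map_ofNat]
      ring
    calc ∑ i, ∑ j, C ((Matrix.reindex e e D) i j) * g (e.symm i) * g (e.symm j)
        = ∑ p, ∑ q, C (D p q) * g p * g q := by
          rw [← Equiv.sum_comp e
            (fun i => ∑ j, C ((Matrix.reindex e e D) i j) * g (e.symm i) * g (e.symm j))]
          refine Finset.sum_congr rfl fun p _ => ?_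
          rw [← Equiv.sum_comp e
            (fun j => C ((Matrix.reindex e e D) (e p) j) * g (e.symm (e p)) * g (e.symm j))]
          simp [Matrix.reindex_apply]
      _ = ∑ a : Fin 3, ∑ k : Fin (m + 1), ∑ b : Fin 3, ∑ l : Fin (m + 1),
            C (D (a, k) (b, l)) * g (a, k) * g (b, l) := by
          rw [Fintype.sum_prod_type]
          exact Finset.sum_congr rfl fun a _ => Finset.sum_congr rfl fun k _ =>
            Fintype.sum_prod_type _
      _ = ∑ a : Fin 3, ∑ k : Fin (m + 1), ∑ b : Fin 3,
            C (B3 a b) * g (a, k) * g (b, k) := by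
          refine Finset.sum_congr rfl fun a _ => Finset.sum_congr rfl fun k _ =>
            Finset.sum_congr rfl fun b _ => ?_
          simp only [hD, Matrix.blockDiagonal_apply, apply_ite C, map_zero, ite_mul, zero_mul]
          simp [Finset.sum_ite_eq]
      _ = ∑ k : Fin (m + 1), ∑ a : Fin 3, ∑ b : Fin 3,
            C (B3 a b) * g (a, k) * g (b, k) := Finset.sum_comm
      _ = 0 := by simp [block]
end
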